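/- arXiv:1408.3009 — 5 statements merged into one kernel-verified Lean document; each statement's English description precedes it below -/
import Mathlib

section
/- Let J, J', K, K' ⊆ Π with J ~ J' and K ~ K'. Then for every subset L₀ ⊆ Π, Σ_{L ⊆ K, L ~ L₀} a_{JKL} = Σ_{L' ⊆ K', L' ~ L₀} a_{J'K'L'}. Consequently, the multiplication [x_J][x_K] := Σ_{L ⊆ K} a_{JKL} [x_L] on equivalence classes is well-defined, and the rational span Σ_W(A_n) = Sp{[x_J] : J ⊆ Π} of the equivalence classes is an algebra over ℚ. -/
open scoped Classical

noncomputable section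

/-- The Weyl group of type `Aₙ`, realized as the symmetric group on `n+1` letters
permuting the coordinates of `ℝ^{n+1}`. -/
abbrev WA (n : ℕ) := Equiv.Perm (Fin (n + 1))

/-- The root `eᵢ - eⱼ` (with `i ≠ j`) of the root system `Φ` of type `Aₙ`,
encoded as the ordered pair `(i, j)`. -/
abbrev RootA (n : ℕ) := Fin (n + 1) × Fin (n + 1)

/-- The natural action of `W(Aₙ)` on roots: `w (eᵢ - eⱼ) = e_{w i} - e_{w j}`. -/
def act (n : ℕ) (w : WA n) (p : RootA n) : RootA n := (w p.1, w p.2)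

/-- Membership in the positive system `Φ⁺`: the root `eᵢ - eⱼ` is positive iff `i < j`. -/
def IsPos (n : ℕ) (p : RootA n) : Prop := p.1 < p.2

/-- The simple system `Π = {eᵢ - e_{i+1} : 1 ≤ i ≤ n}` of type `Aₙ`. -/
def PiA (n : ℕ) : Finset (RootA n) :=
  (Finset.univ : Finset (Fin n)).image fun i => (Fin.castSucc i, Fin.succ i)

/-- The standard parabolic subgroup `W_J`, generated by the reflections `w_r`
(`= the transposition swapping the two coordinates of r`) for `r ∈ J`. -/
def WP (n : ℕ) (J : Finset (RootA n)) : Subgroup (WA n) :=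
  Subgroup.closure ((fun p : RootA n => Equiv.swap p.1 p.2) '' (J : Set (RootA n)))

/-- `X_J = {w ∈ W : w(r) ∈ Φ⁺ for all r ∈ J}`, the set of distinguished (minimal length)
coset representatives of the cosets `w W_J`. -/
def XP (n : ℕ) (J : Finset (RootA n)) : Finset (WA n) :=
  Finset.univ.filter fun w => ∀ r ∈ J, IsPos n (act n w r)

/-- `x_J = Σ_{d ∈ X_J} d` in the rational group algebra `ℚ[W]`. -/
def xA (n : ℕ) (J : Finset (RootA n)) : MonoidAlgebra ℚ (WA n) :=
  ∑ d ∈ XP n J, MonoidAlgebra.of ℚ (WA n) d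

/-- `X_{JK} = X_J⁻¹ ∩ X_K`, the distinguished double coset representatives of
`W_J w W_K` in `W`. -/
def XD (n : ℕ) (J K : Finset (RootA n)) : Finset (WA n) :=
  Finset.univ.filter fun w => w⁻¹ ∈ XP n J ∧ w ∈ XP n K

/-- The structure constant `a_{JKL} = #{w ∈ X_{JK} : w⁻¹(J) ∩ K = L}`. -/
def aC (n : ℕ) (J K L : Finset (RootA n)) : ℕ :=
  ((XD n J K).filter fun w => J.image (act n w⁻¹) ∩ K = L).card

/-- `X_K^J = X_K ∩ W_J` (for `K ⊆ J ⊆ Π`). -/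
def XPrel (n : ℕ) (J K : Finset (RootA n)) : Finset (WA n) :=
  (XP n K).filter fun w => w ∈ WP n J

/-- `x_K^J = Σ_{d ∈ X_K ∩ W_J} d` in `ℚ[W]`. -/
def xArel (n : ℕ) (J K : Finset (RootA n)) : MonoidAlgebra ℚ (WA n) :=
  ∑ d ∈ XPrel n J K, MonoidAlgebra.of ℚ (WA n) d

/-- The relative structure constant `a^J_{MNP} = #{w ∈ X_{MN} ∩ W_J : w⁻¹(M) ∩ N = P}`. -/
def aCrel (n : ℕ) (J M N P : Finset (RootA n)) : ℕ :=
  (((XD n M N).filter fun w => w ∈ WP n J).filter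
    fun w => M.image (act n w⁻¹) ∩ N = P).card

/-- The equivalence relation `J ~ K ⟺ K = w(J) for some w ∈ W` on subsets of roots;
the equivalence class of `x_J` (resp. `x_K^J`) is indexed by the class `Quot.mk (EquivJ n) J`
(resp. `Quot.mk (EquivJ n) K`). -/
def EquivJ (n : ℕ) (J K : Finset (RootA n)) : Prop :=
  ∃ w : WA n, K = J.image (act n w)

/-!
The permutation character `χ_J` of `W` on `W / W_J` satisfies Mackey's formula
`χ_J χ_K = Σ_{L ⊆ K} a_{JKL} χ_L`: pairs of fixed cosets over the double coset of a distinguished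
`w ∈ X_{JK}` are the fixed cosets of `w⁻¹ W_J w ∩ W_K`, which by Kilmoyer's theorem is `W_L` with
`L = w⁻¹(J) ∩ K`. Conjugate parabolic subgroups have the same permutation character, so `χ_J`
depends only on `[x_J]`, and the characters of distinct classes are linearly independent: the
product `c_J` of the cycles on the blocks of `J` can only be conjugated into `W_K` when the blocks
of `J` fit into those of `K`, which forces `|J| ≤ |K|`, with equality only when `J ~ K`. Hence the
classes `[x_J]` span a copy of the algebra of class functions spanned by the `χ_J`, and comparing
coefficients of `χ_J χ_K = χ_{J'} χ_{K'}` gives the equality of the summed structure constants.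
-/

theorem Subgroup.conj_mem_iff_of_inv_mul_mem {G : Type*} [Group G] {H : Subgroup G} {d g : G}
    (h : d⁻¹ * g ∈ H) (x : G) : g⁻¹ * x * g ∈ H ↔ d⁻¹ * x * d ∈ H := by
  have e : g⁻¹ * x * g = (d⁻¹ * g)⁻¹ * (d⁻¹ * x * d) * (d⁻¹ * g) := by group
  rw [e, H.mul_mem_cancel_right h, H.mul_mem_cancel_left (H.inv_mem h)]

theorem linearIndepOn_of_apply_ne_zero {ι X K : Type*} [Field K] {f : ι → X → K} {s : Set ι}
    (x : ι → X) (w : ι → ℕ) (hdiag : ∀ i ∈ s, f i (x i) ≠ 0)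
    (htri : ∀ i ∈ s, ∀ j ∈ s, j ≠ i → f j (x i) ≠ 0 → w i < w j) : LinearIndepOn K f s := by
  rw [linearIndepOn_iff]
  intro l hl hzero
  by_contra hne
  obtain ⟨i, hi, hmax⟩ := l.support.exists_max_image w (Finsupp.support_nonempty_iff.2 hne)
  have hsum := congrFun hzero (x i)
  rw [Finsupp.linearCombination_apply, Finsupp.sum, Finset.sum_apply,
    Finset.sum_eq_single i (fun j hj hji => ?_) (fun h => absurd hi h)] at hsum
  · simp only [Pi.smul_apply, smul_eq_mul, Pi.zero_apply, mul_eq_zero] at hsum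
    exact hsum.elim (Finsupp.mem_support_iff.1 hi) (hdiag i (hl hi))
  · by_contra h
    rw [Pi.smul_apply, smul_eq_mul] at h
    exact (hmax j hj).not_gt (htri i (hl hi) j (hl hj) hji (right_ne_zero_of_mul h))

theorem exists_mul_of_linearIndepOn {K ι A : Type*} [Field K] [Ring A] [Algebra K A] {f : ι → A}
    {s : Set ι} (hf : LinearIndepOn K f s) (hmul : ∀ i j, f i * f j ∈ Submodule.span K (f '' s)) :
    ∃ mul : (ι →₀ K) →ₗ[K] (ι →₀ K) →ₗ[K] (ι →₀ K),
      (∀ x y, mul x y ∈ Finsupp.supported K K s ∧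
        Finsupp.linearCombination K f (mul x y) =
          Finsupp.linearCombination K f x * Finsupp.linearCombination K f y) ∧
      ∀ x y z, mul (mul x y) z = mul x (mul y z) := by
  set T := Finsupp.linearCombination K f
  set Ts := T ∘ₗ (Finsupp.supported K K s).subtype
  have hker : LinearMap.ker Ts = ⊥ := by
    refine LinearMap.ker_eq_bot'.2 fun m hm => Subtype.ext ?_
    exact linearIndepOn_iff.1 hf m m.2 hm
  obtain ⟨G, hG⟩ := LinearMap.exists_leftInverse_of_injective (K := K)
    (V := Finsupp.supported K K s) (V' := A) Ts hker
  have hrange : ∀ x y, T x * T y ∈ LinearMap.range Ts := by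
    intro x y
    rw [LinearMap.range_comp, Submodule.range_subtype,
      ← Finsupp.span_image_eq_map_linearCombination]
    simp only [T, Finsupp.linearCombination_apply, Finsupp.sum, Finset.sum_mul, Finset.mul_sum,
      smul_mul_smul_comm]
    exact Submodule.sum_mem _ fun i _ => Submodule.sum_mem _ fun j _ =>
      Submodule.smul_mem _ _ (hmul j i)
  set mul := ((LinearMap.mul K A).compl₁₂ T T).compr₂ ((Finsupp.supported K K s).subtype ∘ₗ G)
  have hspec : ∀ x y, mul x y ∈ Finsupp.supported K K s ∧ T (mul x y) = T x * T y := by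
    intro x y
    obtain ⟨m, hm⟩ := hrange x y
    have : mul x y = m := by
      simp only [mul, LinearMap.compr₂_apply, LinearMap.compl₁₂_apply, LinearMap.mul_apply',
        LinearMap.comp_apply, ← hm, ← LinearMap.comp_apply G Ts, hG, LinearMap.id_apply,
        Submodule.subtype_apply]
    exact ⟨this ▸ m.2, by rw [this, ← hm]; rfl⟩
  refine ⟨mul, hspec, fun x y z => linearIndepOn_iffₛ.1 hf _ (hspec _ _).1 _ (hspec _ _).1 ?_⟩
  rw [(hspec _ _).2, (hspec _ _).2, (hspec _ _).2, (hspec _ _).2, mul_assoc]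

namespace WeylA

variable {n : ℕ}

section Blocks

def IsLinked (J : Finset (RootA n)) (s : ℕ) : Prop :=
  ∃ i : Fin n, (i : ℕ) + 1 = s ∧ (i.castSucc, i.succ) ∈ J

theorem IsLinked.lt {J : Finset (RootA n)} {s : ℕ} (h : IsLinked J s) : s < n + 1 := by
  obtain ⟨i, rfl, -⟩ := h; omega

/-- The first position of the block of `s`, the blocks of `J` being the maximal runs of linked
positions; `W_J` is the group of permutations preserving every block. -/
def blockStart (J : Finset (RootA n)) : ℕ → ℕ
  | 0 => 0
  | s + 1 => if IsLinked J (s + 1) then blockStart J s else s + 1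

variable (J : Finset (RootA n))

theorem isLinked_succ_iff (i : Fin n) : IsLinked J (i + 1) ↔ (i.castSucc, i.succ) ∈ J := by
  refine ⟨fun ⟨j, hj, hjJ⟩ => ?_, fun h => ⟨i, rfl, h⟩⟩
  obtain rfl : j = i := Fin.ext (by omega)
  exact hjJ

theorem blockStart_succ (s : ℕ) :
    blockStart J (s + 1) = if IsLinked J (s + 1) then blockStart J s else s + 1 := rfl

theorem blockStart_le (s : ℕ) : blockStart J s ≤ s := by
  induction s with
  | zero => rfl
  | succ s ih => rw [blockStart_succ]; split <;> omega

theorem blockStart_mono : Monotone (blockStart J) :=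
  monotone_nat_of_le_succ fun s => by
    rw [blockStart_succ]; split
    · exact le_rfl
    · exact (blockStart_le J s).trans s.le_succ

theorem blockStart_succ_eq_iff (s : ℕ) :
    blockStart J (s + 1) = blockStart J s ↔ IsLinked J (s + 1) := by
  rw [blockStart_succ]
  split_ifs with h
  · exact iff_of_true rfl h
  · exact iff_of_false (by have := blockStart_le J s; omega) h

theorem blockStart_castSucc_eq_iff (i : Fin n) :
    blockStart J i.succ = blockStart J i.castSucc ↔ (i.castSucc, i.succ) ∈ J := by
  simpa [isLinked_succ_iff] using blockStart_succ_eq_iff J i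

theorem blockStart_blockStart (s : ℕ) : blockStart J (blockStart J s) = blockStart J s := by
  induction s with
  | zero => rfl
  | succ s ih => rw [blockStart_succ]; split <;> simp_all [blockStart_succ]

theorem blockStart_eq_self_iff (s : ℕ) : blockStart J s = s ↔ ¬ IsLinked J s := by
  cases s with
  | zero => simp only [blockStart, true_iff]; rintro ⟨i, hi, -⟩; omega
  | succ s =>
    rw [← blockStart_succ_eq_iff, blockStart_succ]
    have := blockStart_le J s
    split_ifs
    · exact iff_of_false (by omega) (not_not.2 rfl)
    · exact iff_of_true rfl (by omega)

theorem blockStart_eq_of_le_of_le {x s : ℕ} (h1 : blockStart J s ≤ x) (h2 : x ≤ s) :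
    blockStart J x = blockStart J s := by
  induction s with
  | zero => rw [Nat.le_zero.1 h2]
  | succ s ih =>
    rcases h2.eq_or_lt with rfl | hlt
    · rfl
    · rw [blockStart_succ] at h1 ⊢
      split_ifs at h1 ⊢
      · exact ih h1 (by omega)
      · omega

theorem rel_of_blockStart_eq (r : Fin (n + 1) → Fin (n + 1) → Prop)
    (htrans : ∀ a b c, r a b → r b c → r a c)
    (hr : ∀ i : Fin n, (i.castSucc, i.succ) ∈ J → r i.castSucc i.succ)
    {p q : Fin (n + 1)} (hb : blockStart J p = blockStart J q) (hpq : p < q) : r p q := by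
  have step : ∀ m : Fin (n + 1), ∀ h : (m : ℕ) + 1 < n + 1,
      blockStart J (m + 1) = blockStart J m → r m ⟨m + 1, h⟩ := fun m h hm =>
    hr ⟨m, by omega⟩ ((blockStart_castSucc_eq_iff J _).1 hm)
  obtain ⟨k, hk⟩ : ∃ k, (q : ℕ) = p + k + 1 := ⟨q - p - 1, by omega⟩
  induction k generalizing q with
  | zero =>
    have h : (p : ℕ) + 1 < n + 1 := by omega
    rw [show q = ⟨p + 1, h⟩ from Fin.ext hk] at hb ⊢
    exact step p h hb.symm
  | succ k ih =>
    have h : (p : ℕ) + k + 1 < n + 1 := by omega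
    have hm : blockStart J (p + k + 1) = blockStart J q :=
      blockStart_eq_of_le_of_le J (by have := blockStart_le J p; omega) (by omega)
    have hrm : r p ⟨p + k + 1, h⟩ := ih (q := ⟨p + k + 1, h⟩) (hb.trans hm.symm)
      (Fin.mk_lt_mk.2 (by omega)) rfl
    rw [show q = ⟨p + k + 1 + 1, by omega⟩ from Fin.ext (by simp; omega)] at hm ⊢
    exact htrans _ _ _ hrm (step _ _ hm.symm)

theorem blockStart_eq_of_forall_mem {p q : ℕ} (hpq : p ≤ q)
    (hq : q < n + 1) (h : ∀ i : Fin n, p ≤ i → (i : ℕ) < q → (i.castSucc, i.succ) ∈ J) :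
    blockStart J p = blockStart J q := by
  induction q, hpq using Nat.le_induction with
  | base => rfl
  | succ q hpq ih =>
    obtain ⟨i, rfl⟩ : ∃ i : Fin n, (i : ℕ) = q := ⟨⟨q, by omega⟩, rfl⟩
    rw [ih (by omega) fun j hj hjq => h j hj (by omega),
      ((blockStart_succ_eq_iff J i).2 ((isLinked_succ_iff J i).2 (h i hpq (by omega)))).symm]

end Blocks

section Parabolic

@[simp]
theorem act_inv_act (w : WA n) (r : RootA n) : act n w⁻¹ (act n w r) = r := by simp [act]

@[simp]
theorem act_act_inv (w : WA n) (r : RootA n) : act n w (act n w⁻¹ r) = r := by simp [act]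

theorem act_injective (w : WA n) : Function.Injective (act n w) :=
  Function.LeftInverse.injective (act_inv_act w)

theorem equivJ_equivalence : Equivalence (EquivJ n) where
  refl J := ⟨1, by ext; simp [act]⟩
  symm := by
    rintro J _ ⟨w, rfl⟩
    exact ⟨w⁻¹, by simp [Finset.image_image, Function.comp_def]⟩
  trans := by
    rintro J _ _ ⟨w, rfl⟩ ⟨v, rfl⟩
    exact ⟨v * w, by rw [Finset.image_image]; rfl⟩

theorem quot_mk_eq_iff {J K : Finset (RootA n)} :
    Quot.mk (EquivJ n) J = Quot.mk (EquivJ n) K ↔ EquivJ n J K := by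
  rw [Quot.eq, equivJ_equivalence.eqvGen_iff]

theorem mem_PiA_iff {r : RootA n} : r ∈ PiA n ↔ ∃ i : Fin n, r = (i.castSucc, i.succ) := by
  simp [PiA, eq_comm]

theorem WP_image_act (A : Finset (RootA n)) (v : WA n) :
    WP n (A.image (act n v)) = (WP n A).map (MulAut.conj v).toMonoidHom := by
  rw [WP, WP, MonoidHom.map_closure, Finset.coe_image, Set.image_image, Set.image_image]
  congr 1
  exact Set.image_congr fun r _ => (Equiv.swap_apply_apply v r.1 r.2).trans (by simp)

theorem mem_WP_image_act_iff (A : Finset (RootA n)) (v u : WA n) :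
    u ∈ WP n (A.image (act n v)) ↔ v⁻¹ * u * v ∈ WP n A := by
  rw [WP_image_act, Subgroup.mem_map_equiv]
  simp

variable {J : Finset (RootA n)} (hJ : J ⊆ PiA n)
include hJ

theorem mem_XP_iff (w : WA n) :
    w ∈ XP n J ↔ ∀ i : Fin n, (i.castSucc, i.succ) ∈ J → w i.castSucc < w i.succ := by
  simp only [XP, Finset.mem_filter, Finset.mem_univ, true_and]
  refine ⟨fun h _ hi => h _ hi, fun h r hr => ?_⟩
  obtain ⟨i, rfl⟩ := mem_PiA_iff.1 (hJ hr)
  exact h i hr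

theorem one_mem_XP : (1 : WA n) ∈ XP n J :=
  (mem_XP_iff hJ 1).2 fun _ _ => Fin.castSucc_lt_succ

theorem apply_lt_apply_of_mem_XP {w : WA n} (hw : w ∈ XP n J) {p q : Fin (n + 1)}
    (hb : blockStart J p = blockStart J q) (hpq : p < q) : w p < w q :=
  rel_of_blockStart_eq J (fun p q => w p < w q) (fun _ _ _ => lt_trans)
    ((mem_XP_iff hJ w).1 hw) hb hpq

theorem blockStart_apply_eq_of_mem_WP {u : WA n} (hu : u ∈ WP n J) (p : Fin (n + 1)) :
    blockStart J (u p) = blockStart J p := by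
  let H : Subgroup (WA n) :=
    { carrier := {v | ∀ p, blockStart J (v p) = blockStart J p}
      one_mem' := fun _ => rfl
      mul_mem' := fun hv hw p => (hv _).trans (hw p)
      inv_mem' := fun {v} hv p => by simpa using (hv (v⁻¹ p)).symm }
  refine (Subgroup.closure_le (K := H)).2 ?_ hu p
  rintro _ ⟨r, hr, rfl⟩ p
  obtain ⟨i, rfl⟩ := mem_PiA_iff.1 (hJ hr)
  have := (blockStart_castSucc_eq_iff J i).2 hr
  simp only [Equiv.swap_apply_def]
  split_ifs with h1 h2 <;> simp_all

theorem mem_WP_iff (u : WA n) :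
    u ∈ WP n J ↔ ∀ p : Fin (n + 1), blockStart J (u p) = blockStart J p := by
  refine ⟨blockStart_apply_eq_of_mem_WP hJ, fun hu => ?_⟩
  have hswap : ∀ σ ∈ (fun r : RootA n => Equiv.swap r.1 r.2) '' (J : Set (RootA n)),
      σ.IsSwap := by
    rintro _ ⟨r, hr, rfl⟩
    obtain ⟨i, rfl⟩ := mem_PiA_iff.1 (hJ hr)
    exact ⟨_, _, Fin.castSucc_lt_succ.ne, rfl⟩
  refine (mem_closure_isSwap hswap).2 ⟨Set.toFinite _, fun p => ?_⟩
  have horbit : ∀ p q : Fin (n + 1), blockStart J p = blockStart J q → p < q →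
      q ∈ MulAction.orbit (WP n J) p := fun p q =>
    rel_of_blockStart_eq J (fun p q => q ∈ MulAction.orbit (WP n J) p)
      (fun _ _ _ hab hbc => (MulAction.orbit_eq_iff.2 hab).symm ▸ hbc) fun i hi =>
      ⟨⟨_, Subgroup.subset_closure ⟨_, hi, rfl⟩⟩, Equiv.swap_apply_left _ _⟩
  rcases lt_trichotomy p (u p) with h | h | h
  · exact horbit _ _ (hu p).symm h
  · rw [← h]; exact MulAction.mem_orbit_self p
  · exact MulAction.mem_orbit_symm.1 (horbit _ _ (hu p) h)

end Parabolic

section CosetRep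

variable {J : Finset (RootA n)}

theorem monotone_toLex_blockStart {α : Type*} [Preorder α] {φ : Fin (n + 1) → α}
    (hφ : ∀ i : Fin n, (i.castSucc, i.succ) ∈ J → φ i.castSucc ≤ φ i.succ) :
    Monotone fun p : Fin (n + 1) => toLex (blockStart J p, φ p) := by
  intro p q hpq
  rcases (blockStart_mono J hpq).lt_or_eq with h | h
  · exact Prod.Lex.toLex_le_toLex.2 (Or.inl h)
  rcases hpq.eq_or_lt with rfl | hlt
  · exact le_rfl
  · exact Prod.Lex.toLex_le_toLex.2
      (Or.inr ⟨h, rel_of_blockStart_eq J (φ · ≤ φ ·) (fun _ _ _ => le_trans) hφ h hlt⟩)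

/-- Both functions are the sorted arrangement of their common values on every block. -/
theorem eq_of_monotone_of_comp_eq {α : Type*} [LinearOrder α] {φ ψ : Fin (n + 1) → α}
    (hφ : ∀ i : Fin n, (i.castSucc, i.succ) ∈ J → φ i.castSucc ≤ φ i.succ)
    (hψ : ∀ i : Fin n, (i.castSucc, i.succ) ∈ J → ψ i.castSucc ≤ ψ i.succ)
    {c : WA n} (hc : ∀ p, blockStart J (c p) = blockStart J p) (hψφ : ψ = φ ∘ c) : ψ = φ := by
  have key := Tuple.unique_monotone (f := fun p => toLex (blockStart J p, φ p)) (σ := 1) (τ := c)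
    (monotone_toLex_blockStart hφ)
    (by simpa [Function.comp_def, hc, hψφ] using monotone_toLex_blockStart hψ)
  funext p
  simpa [hψφ, hc] using (congrFun key p).symm

theorem blockStart_sort {α : Type*} [LinearOrder α] (g : Fin (n + 1) → α) (p : Fin (n + 1)) :
    blockStart J (Tuple.sort (fun p => toLex (blockStart J p, g p)) p) = blockStart J p :=
  congrFun (Tuple.unique_monotone (f := fun p : Fin (n + 1) => blockStart J p) (τ := 1)
    (Prod.Lex.monotone_fst_ofLex.comp (Tuple.monotone_sort fun p => toLex (blockStart J p, g p)))
    ((blockStart_mono J).comp Fin.val_strictMono.monotone)) p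

/-- The distinguished representative of `x W_J`. -/
def cosetRep (J : Finset (RootA n)) (x : WA n) : WA n :=
  x * Tuple.sort fun p => toLex (blockStart J p, x p)

variable (hJ : J ⊆ PiA n)
include hJ

theorem eq_of_mem_XP_of_inv_mul_mem_WP {d e : WA n} (hd : d ∈ XP n J) (he : e ∈ XP n J)
    (h : e⁻¹ * d ∈ WP n J) : d = e := by
  have hmono : ∀ {u : WA n}, u ∈ XP n J →
      ∀ i : Fin n, (i.castSucc, i.succ) ∈ J → u i.castSucc ≤ u i.succ :=
    fun hu i hi => ((mem_XP_iff hJ _).1 hu i hi).le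
  exact DFunLike.coe_injective (eq_of_monotone_of_comp_eq (hmono he) (hmono hd)
    ((mem_WP_iff hJ _).1 h) (by ext; simp))

theorem apply_lt_apply_of_inv_mem_XP {w : WA n} (hw : w⁻¹ ∈ XP n J) {p q : Fin (n + 1)}
    (hpq : p < q) (hb : blockStart J (w p) ≤ blockStart J (w q)) : w p < w q := by
  rcases hb.lt_or_eq with hlt | heq
  · by_contra! h
    exact hlt.not_ge (blockStart_mono J (Fin.le_def.1 h))
  · by_contra! h
    have := apply_lt_apply_of_mem_XP hJ hw heq.symm (h.lt_of_ne (w.injective.ne hpq.ne'))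
    simp only [Equiv.Perm.coe_inv, Equiv.symm_apply_apply] at this
    exact this.not_gt hpq

theorem inv_mul_cosetRep_mem_WP (x : WA n) : x⁻¹ * cosetRep J x ∈ WP n J := by
  rw [cosetRep, inv_mul_cancel_left, mem_WP_iff hJ]
  exact blockStart_sort _

theorem cosetRep_mem_XP (x : WA n) : cosetRep J x ∈ XP n J := by
  rw [mem_XP_iff hJ]
  intro i hi
  have hle := Tuple.monotone_sort (fun p => toLex (blockStart J p, x p))
    (Fin.castSucc_lt_succ (i := i)).le
  simp only [Function.comp_apply, Prod.Lex.toLex_le_toLex, blockStart_sort,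
    (blockStart_castSucc_eq_iff J i).2 hi, lt_self_iff_false, true_and, false_or] at hle
  exact hle.lt_of_ne ((cosetRep J x).injective.ne Fin.castSucc_lt_succ.ne)

theorem cosetRep_eq_iff {d x : WA n} (hd : d ∈ XP n J) : cosetRep J x = d ↔ d⁻¹ * x ∈ WP n J := by
  have hx := inv_mul_cosetRep_mem_WP hJ x
  constructor
  · rintro rfl
    simpa using (WP n J).inv_mem hx
  · intro h
    refine eq_of_mem_XP_of_inv_mul_mem_WP hJ (cosetRep_mem_XP hJ x) hd ?_
    simpa [mul_assoc] using (WP n J).mul_mem h hx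

theorem cosetRep_eq_cosetRep_iff {x y : WA n} : cosetRep J x = cosetRep J y ↔ x⁻¹ * y ∈ WP n J := by
  rw [cosetRep_eq_iff hJ (cosetRep_mem_XP hJ y), ← (WP n J).inv_mem_iff,
    ← (WP n J).mul_mem_cancel_right ((WP n J).inv_mem (inv_mul_cosetRep_mem_WP hJ y))]
  convert Iff.rfl using 2
  group

end CosetRep

section DoubleCosetRep

variable {A B : Finset (RootA n)}

/-- The distinguished representative of `W_A z W_B`: sort the positions within every block of `B`
by the `A`-block of their value under `z`, then pass to the distinguished representative of the
resulting right coset of `W_A`. -/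
def doubleCosetRep (A B : Finset (RootA n)) (z : WA n) : WA n :=
  (cosetRep A (z * Tuple.sort fun p => toLex (blockStart B p, blockStart A (z p)))⁻¹)⁻¹

theorem mem_XD_iff {w : WA n} : w ∈ XD n A B ↔ w⁻¹ ∈ XP n A ∧ w ∈ XP n B := by
  simp [XD]

variable (hA : A ⊆ PiA n) (hB : B ⊆ PiA n)
include hA hB

theorem doubleCosetRep_spec (z : WA n) :
    doubleCosetRep A B z ∈ XD n A B ∧
      ∃ a ∈ WP n A, ∃ b ∈ WP n B, doubleCosetRep A B z = a * z * b := by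
  set σ := Tuple.sort fun p => toLex (blockStart B p, blockStart A (z p))
  set w := doubleCosetRep A B z
  have hσ : σ ∈ WP n B := (mem_WP_iff hB σ).2 (blockStart_sort _)
  have hwA : w⁻¹ ∈ XP n A := by
    simp only [w, doubleCosetRep, inv_inv]
    exact cosetRep_mem_XP hA _
  have ha : w * (z * σ)⁻¹ ∈ WP n A := by
    simpa [w, doubleCosetRep] using (WP n A).inv_mem (inv_mul_cosetRep_mem_WP hA (z * σ)⁻¹)
  refine ⟨mem_XD_iff.2 ⟨hwA, (mem_XP_iff hB w).2 fun i hi => ?_⟩, _, ha, σ, hσ, by group⟩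
  refine apply_lt_apply_of_inv_mem_XP hA hwA Fin.castSucc_lt_succ ?_
  have hle := Tuple.monotone_sort (fun p => toLex (blockStart B p, blockStart A (z p)))
    (Fin.castSucc_lt_succ (i := i)).le
  simp only [Function.comp_apply, Prod.Lex.toLex_le_toLex, blockStart_sort,
    (blockStart_castSucc_eq_iff B i).2 hi, lt_self_iff_false, true_and, false_or] at hle
  have hwz : ∀ p, blockStart A (w p) = blockStart A (z (σ p)) := fun p => by
    simpa using blockStart_apply_eq_of_mem_WP hA ha (z (σ p))
  rwa [hwz, hwz]

theorem doubleCosetRep_eq {z w' : WA n} (hw' : w' ∈ XD n A B) {a b : WA n} (ha : a ∈ WP n A)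
    (hb : b ∈ WP n B) (h : w' = a * z * b) : doubleCosetRep A B z = w' := by
  obtain ⟨hw, a₀, ha₀, b₀, hb₀, hw₀⟩ := doubleCosetRep_spec hA hB z
  set w := doubleCosetRep A B z
  rw [mem_XD_iff] at hw hw'
  have hmono : ∀ {u : WA n}, u ∈ XP n B → ∀ i : Fin n, (i.castSucc, i.succ) ∈ B →
      blockStart A (u i.castSucc) ≤ blockStart A (u i.succ) := fun hu i hi =>
    blockStart_mono A (Fin.le_def.1 ((mem_XP_iff hB _).1 hu i hi).le)
  have hw'w : w' = (a * a₀⁻¹) * w * (b₀⁻¹ * b) := by rw [h, hw₀]; group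
  have hblocks := eq_of_monotone_of_comp_eq (φ := fun p => blockStart A (w p))
    (ψ := fun p => blockStart A (w' p)) (hmono hw.2) (hmono hw'.2)
    ((mem_WP_iff hB _).1 ((WP n B).mul_mem ((WP n B).inv_mem hb₀) hb)) (funext fun p => by
      simpa [hw'w] using blockStart_apply_eq_of_mem_WP hA
        ((WP n A).mul_mem ha ((WP n A).inv_mem ha₀)) (w ((b₀⁻¹ * b) p)))
  refine inv_injective (eq_of_mem_XP_of_inv_mul_mem_WP hA hw.1 hw'.1 ?_)
  rw [inv_inv, mem_WP_iff hA]
  intro p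
  simpa using congrFun hblocks (w⁻¹ p)

end DoubleCosetRep

section Kilmoyer

variable {A B : Finset (RootA n)} {w : WA n}

theorem mem_image_inv_inter_iff {r : RootA n} :
    r ∈ A.image (act n w⁻¹) ∩ B ↔ r ∈ B ∧ act n w r ∈ A := by
  simp only [Finset.mem_inter, Finset.mem_image]
  constructor
  · rintro ⟨⟨a, ha, rfl⟩, hr⟩
    simpa using ⟨hr, ha⟩
  · exact fun ⟨hr, ha⟩ => ⟨⟨_, ha, act_inv_act w r⟩, hr⟩

variable (hA : A ⊆ PiA n) (hB : B ⊆ PiA n) (hw : w ∈ XD n A B)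
include hA

theorem blockStart_eq_of_blockStart_inter_eq {p q : Fin (n + 1)}
    (h : blockStart (A.image (act n w⁻¹) ∩ B) p = blockStart (A.image (act n w⁻¹) ∩ B) q) :
    blockStart B p = blockStart B q ∧ blockStart A (w p) = blockStart A (w q) := by
  have hrel : ∀ p q : Fin (n + 1), blockStart (A.image (act n w⁻¹) ∩ B) p =
      blockStart (A.image (act n w⁻¹) ∩ B) q → p < q →
      blockStart B p = blockStart B q ∧ blockStart A (w p) = blockStart A (w q) := fun p q =>
    rel_of_blockStart_eq (A.image (act n w⁻¹) ∩ B) (fun p q =>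
      blockStart B p = blockStart B q ∧ blockStart A (w p) = blockStart A (w q))
      (fun _ _ _ h₁ h₂ => ⟨h₁.1.trans h₂.1, h₁.2.trans h₂.2⟩) fun i hi => by
      rw [mem_image_inv_inter_iff] at hi
      obtain ⟨j, hj⟩ := mem_PiA_iff.1 (hA hi.2)
      simp only [act, Prod.mk.injEq] at hj
      rw [hj.1, hj.2, (blockStart_castSucc_eq_iff B i).2 hi.1]
      exact ⟨rfl, ((blockStart_castSucc_eq_iff A j).2 (by simpa [act, hj] using hi.2)).symm⟩
  rcases lt_trichotomy p q with hpq | rfl | hpq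
  · exact hrel p q h hpq
  · exact ⟨rfl, rfl⟩
  · exact (hrel q p h.symm hpq).imp Eq.symm Eq.symm

include hB hw

/-- Between two positions of one block of `B` whose images lie in one block of `A`, consecutive
positions are sent to consecutive positions: `w` increases on the block of `B`, `w⁻¹` on the block
of `A`, and so no value can be skipped. -/
theorem act_mem_of_blockStart_eq {p q : Fin (n + 1)} {i : Fin n} (hpi : p ≤ i.castSucc)
    (hiq : i.succ ≤ q) (hBpq : blockStart B p = blockStart B q)
    (hApq : blockStart A (w p) = blockStart A (w q)) : act n w (i.castSucc, i.succ) ∈ A := by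
  rw [mem_XD_iff] at hw
  have hblockB : ∀ t : Fin (n + 1), p ≤ t → t ≤ q → blockStart B t = blockStart B q :=
    fun t hpt htq => blockStart_eq_of_le_of_le B
      (by have := blockStart_le B p; rw [Fin.le_def] at hpt; omega) htq
  have hmono : ∀ t t' : Fin (n + 1), p ≤ t → t ≤ t' → t' ≤ q → w t ≤ w t' := by
    intro t t' hpt htt' ht'q
    rcases htt'.eq_or_lt with rfl | hlt
    · exact le_rfl
    · exact (apply_lt_apply_of_mem_XP hB hw.2 ((hblockB t hpt (htt'.trans ht'q)).trans
        (hblockB t' (hpt.trans htt') ht'q).symm) hlt).le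
  have hlt : w i.castSucc < w i.succ := apply_lt_apply_of_mem_XP hB hw.2
    ((hblockB _ hpi (Fin.castSucc_lt_succ.le.trans hiq)).trans
      (hblockB _ (hpi.trans Fin.castSucc_lt_succ.le) hiq).symm) Fin.castSucc_lt_succ
  have h₁ := hmono _ _ le_rfl hpi (Fin.castSucc_lt_succ.le.trans hiq)
  have h₂ := hmono _ _ (hpi.trans Fin.castSucc_lt_succ.le) hiq le_rfl
  rw [Fin.le_def] at h₁ h₂
  rw [Fin.lt_def] at hlt
  have hblockA : ∀ y : Fin (n + 1), (w p : ℕ) ≤ y → (y : ℕ) ≤ w q →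
      blockStart A y = blockStart A (w q) :=
    fun y hpy hyq => blockStart_eq_of_le_of_le A (by have := blockStart_le A (w p); omega) hyq
  have hz : (w i.succ : ℕ) = w i.castSucc + 1 := by
    by_contra hne
    let z : Fin (n + 1) := ⟨w i.castSucc + 1, by omega⟩
    have hAz := hblockA z (by simp [z]; omega) (by simp [z]; omega)
    have e₁ := apply_lt_apply_of_mem_XP hA hw.1
      ((hblockA (w i.castSucc) (by omega) (by omega)).trans hAz.symm) (Fin.lt_def.2 (by simp [z]))
    have e₂ := apply_lt_apply_of_mem_XP hA hw.1
      (hAz.trans (hblockA (w i.succ) (by omega) (by omega)).symm)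
      (Fin.lt_def.2 (by simp [z]; omega))
    simp only [Equiv.Perm.coe_inv, Equiv.symm_apply_apply, Fin.lt_def, Fin.val_castSucc,
      Fin.val_succ] at e₁ e₂
    omega
  let j : Fin n := ⟨w i.castSucc, by omega⟩
  have hact : act n w (i.castSucc, i.succ) = (j.castSucc, j.succ) :=
    Prod.ext (Fin.ext rfl) (Fin.ext (by simpa [j, act] using hz))
  rw [hact, ← blockStart_castSucc_eq_iff]
  exact (hblockA j.succ (by simp [j]; omega) (by simp [j]; omega)).trans
    (hblockA j.castSucc (by simp [j]; omega) (by simp [j]; omega)).symm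

theorem blockStart_inter_eq_of_blockStart_eq {p q : Fin (n + 1)} (hpq : p ≤ q)
    (hBpq : blockStart B p = blockStart B q) (hApq : blockStart A (w p) = blockStart A (w q)) :
    blockStart (A.image (act n w⁻¹) ∩ B) p = blockStart (A.image (act n w⁻¹) ∩ B) q := by
  refine blockStart_eq_of_forall_mem _ hpq q.isLt fun i hpi hiq => mem_image_inv_inter_iff.2
    ⟨(blockStart_castSucc_eq_iff B i).1 ?_, act_mem_of_blockStart_eq hA hB hw hpi
      (Fin.le_def.2 (by simp; omega)) hBpq hApq⟩
  have hblockB : ∀ t : ℕ, p ≤ t → t ≤ q → blockStart B t = blockStart B q := fun t hpt htq =>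
    blockStart_eq_of_le_of_le B (by have := blockStart_le B p; omega) htq
  simp only [Fin.val_succ, Fin.val_castSucc]
  rw [hblockB (i + 1) (by omega) (by omega), hblockB i hpi hiq.le]

/-- Kilmoyer's theorem: `w⁻¹ W_A w ∩ W_B = W_L` with `L = w⁻¹(A) ∩ B`, for `w ∈ X_{AB}`. -/
theorem mem_WP_image_inv_inter_iff (u : WA n) :
    u ∈ WP n (A.image (act n w⁻¹) ∩ B) ↔ u ∈ WP n B ∧ w * u * w⁻¹ ∈ WP n A := by
  have hL : A.image (act n w⁻¹) ∩ B ⊆ PiA n := fun _ hr => hB (Finset.mem_inter.1 hr).2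
  rw [mem_WP_iff hL, mem_WP_iff hB, mem_WP_iff hA]
  constructor
  · intro hu
    refine ⟨fun p => (blockStart_eq_of_blockStart_inter_eq hA (hu p)).1, fun y => ?_⟩
    simpa using (blockStart_eq_of_blockStart_inter_eq hA (hu (w⁻¹ y))).2
  · rintro ⟨huB, huA⟩ p
    have hA' : blockStart A (w (u p)) = blockStart A (w p) := by simpa using huA (w p)
    rcases le_total p (u p) with h | h
    · exact (blockStart_inter_eq_of_blockStart_eq hA hB hw h (huB p).symm hA'.symm).symm
    · exact blockStart_inter_eq_of_blockStart_eq hA hB hw h (huB p) hA'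

end Kilmoyer

def fixedReps (J : Finset (RootA n)) (x : WA n) : Finset (WA n) :=
  (XP n J).filter fun d => d⁻¹ * x * d ∈ WP n J

/-- The permutation character of `W` on `W / W_J`: `x` fixes the coset `d W_J` iff
`d⁻¹ x d ∈ W_J`, and the `d W_J` with `d ∈ X_J` are all the cosets. -/
def permChar (J : Finset (RootA n)) (x : WA n) : ℚ :=
  (fixedReps J x).card

theorem mem_fixedReps {J : Finset (RootA n)} {x d : WA n} :
    d ∈ fixedReps J x ↔ d ∈ XP n J ∧ d⁻¹ * x * d ∈ WP n J :=
  Finset.mem_filter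

theorem cosetRep_mem_fixedReps {J : Finset (RootA n)} (hJ : J ⊆ PiA n) {x g : WA n}
    (hg : g⁻¹ * x * g ∈ WP n J) : cosetRep J g ∈ fixedReps J x :=
  mem_fixedReps.2 ⟨cosetRep_mem_XP hJ g, (Subgroup.conj_mem_iff_of_inv_mul_mem
    (by simpa using (WP n J).inv_mem (inv_mul_cosetRep_mem_WP hJ g)) x).1 hg⟩

section Mackey

variable {A B : Finset (RootA n)} (hA : A ⊆ PiA n) (hB : B ⊆ PiA n) {w : WA n} (hw : w ∈ XD n A B)
  (x : WA n)
include hA hB hw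

/-- The pairs of fixed cosets `(d W_A, e W_B)` lying over the double coset `W_A w W_B`
correspond to the fixed cosets of `W_L`, `L = w⁻¹(A) ∩ B`, through `c ↦ (c w⁻¹ W_A, c W_B)`. -/
theorem card_fixedReps_inter :
    ((fixedReps A x ×ˢ fixedReps B x).filter
        fun de => doubleCosetRep A B (de.1⁻¹ * de.2) = w).card =
      (fixedReps (A.image (act n w⁻¹) ∩ B) x).card := by
  have hkil := mem_WP_image_inv_inter_iff hA hB hw
  set L := A.image (act n w⁻¹) ∩ B
  have hL : L ⊆ PiA n := fun _ hr => hB (Finset.mem_inter.1 hr).2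
  symm
  refine Finset.card_bij (fun c _ => (cosetRep A (c * w⁻¹), cosetRep B c)) ?_ ?_ ?_
  · intro c hc
    rw [mem_fixedReps, hkil] at hc
    have hd := inv_mul_cosetRep_mem_WP hA (c * w⁻¹)
    have he := inv_mul_cosetRep_mem_WP hB c
    simp only [Finset.mem_filter, Finset.mem_product]
    refine ⟨⟨cosetRep_mem_fixedReps hA ?_, cosetRep_mem_fixedReps hB hc.2.1⟩,
      doubleCosetRep_eq hA hB hw hd ((WP n B).inv_mem he) (by group)⟩
    convert hc.2.2 using 1
    group
  · intro c hc c' hc' h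
    simp only [Prod.mk.injEq, cosetRep_eq_cosetRep_iff hA, cosetRep_eq_cosetRep_iff hB] at h
    refine (eq_of_mem_XP_of_inv_mul_mem_WP hL (mem_fixedReps.1 hc').1 (mem_fixedReps.1 hc).1
      ((hkil _).2 ⟨h.2, ?_⟩)).symm
    convert h.1 using 1
    group
  · rintro ⟨d, e⟩ hde
    simp only [Finset.mem_filter, Finset.mem_product, mem_fixedReps] at hde
    obtain ⟨⟨⟨hdX, hdx⟩, heX, hex⟩, hrep⟩ := hde
    obtain ⟨-, a, ha, b, hb, hab⟩ := doubleCosetRep_spec hA hB (d⁻¹ * e)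
    rw [hrep] at hab
    have hl := (hkil _).1 (inv_mul_cosetRep_mem_WP hL (e * b))
    refine ⟨cosetRep L (e * b), cosetRep_mem_fixedReps hL ((hkil _).2 ⟨?_, ?_⟩), ?_⟩
    · exact (Subgroup.conj_mem_iff_of_inv_mul_mem (by simpa using hb) x).2 hex
    · have hda : d⁻¹ * (e * b * w⁻¹) = a⁻¹ := by rw [hab]; group
      convert (Subgroup.conj_mem_iff_of_inv_mul_mem (hda ▸ (WP n A).inv_mem ha) x).2 hdx using 1
      group
    · refine Prod.ext ((cosetRep_eq_iff hA hdX).2 ?_) ((cosetRep_eq_iff hB heX).2 ?_)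
      · have e₁ : d⁻¹ * (cosetRep L (e * b) * w⁻¹) =
            a⁻¹ * (w * ((e * b)⁻¹ * cosetRep L (e * b)) * w⁻¹) := by rw [hab]; group
        simpa [e₁] using (WP n A).mul_mem ((WP n A).inv_mem ha) hl.2
      · have e₂ : e⁻¹ * cosetRep L (e * b) = b * ((e * b)⁻¹ * cosetRep L (e * b)) := by group
        simpa [e₂] using (WP n B).mul_mem hb hl.1

omit hw in
/-- Mackey's formula for the permutation characters of parabolic subgroups. -/
theorem permChar_mul_apply :
    permChar A x * permChar B x = ∑ w ∈ XD n A B, permChar (A.image (act n w⁻¹) ∩ B) x := by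
  rw [permChar, permChar, ← Nat.cast_mul, ← Finset.card_product,
    Finset.card_eq_sum_card_fiberwise fun de _ => (doubleCosetRep_spec hA hB (de.1⁻¹ * de.2)).1]
  push_cast
  exact Finset.sum_congr rfl fun w hw => congrArg _ (card_fixedReps_inter hA hB hw x)

omit hw x in
theorem permChar_mul :
    permChar A * permChar B = ∑ L ∈ B.powerset, (aC n A B L : ℚ) • permChar L := by
  funext x
  rw [Pi.mul_apply, permChar_mul_apply hA hB, ← Finset.sum_fiberwise_of_maps_to
    (g := fun w => A.image (act n w⁻¹) ∩ B)
    fun _ _ => Finset.mem_powerset.2 Finset.inter_subset_right]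
  simp only [Finset.sum_apply, Pi.smul_apply, smul_eq_mul, aC]
  refine Finset.sum_congr rfl fun L _ => ?_
  rw [Finset.sum_congr rfl fun w hw => congrArg (permChar · x) (Finset.mem_filter.1 hw).2,
    Finset.sum_const, nsmul_eq_mul]

end Mackey

theorem permChar_image_act {A : Finset (RootA n)} (hA : A ⊆ PiA n) {v : WA n}
    (hA' : A.image (act n v) ⊆ PiA n) : permChar (A.image (act n v)) = permChar A := by
  funext x
  simp only [permChar, Nat.cast_inj]
  refine Finset.card_bij (fun d _ => cosetRep A (d * v)) (fun d hd => ?_) (fun d hd d' hd' h => ?_)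
    fun d hd => ?_
  · refine cosetRep_mem_fixedReps hA ?_
    simpa [mul_assoc, mem_WP_image_act_iff] using (mem_fixedReps.1 hd).2
  · rw [cosetRep_eq_cosetRep_iff hA] at h
    refine (eq_of_mem_XP_of_inv_mul_mem_WP hA' (mem_fixedReps.1 hd').1
      (mem_fixedReps.1 hd).1 ?_).symm
    simpa [mem_WP_image_act_iff, mul_assoc] using h
  · rw [mem_fixedReps] at hd
    have hl := (mem_WP_image_act_iff A v _).1 (inv_mul_cosetRep_mem_WP hA' (d * v⁻¹))
    refine ⟨cosetRep _ (d * v⁻¹), cosetRep_mem_fixedReps hA' ?_, (cosetRep_eq_iff hA hd.1).2 ?_⟩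
    · simpa [mem_WP_image_act_iff, mul_assoc] using hd.2
    · simpa [mul_assoc] using hl

section BlockCycle

variable (A : Finset (RootA n))

def blockCycle : WA n :=
  Equiv.ofBijective
    (fun p => if h : IsLinked A (p + 1) then ⟨p + 1, h.lt⟩
      else ⟨blockStart A p, (blockStart_le A p).trans_lt p.isLt⟩)
    (Finite.injective_iff_bijective.1 fun p q hpq => by
      have key : ∀ p q : Fin (n + 1), IsLinked A (p + 1) → ¬ IsLinked A (q + 1) →
          (p : ℕ) + 1 ≠ blockStart A q := fun p q hp _ h => by
        have := blockStart_blockStart A q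
        rw [← h, (blockStart_succ_eq_iff A p).2 hp] at this
        have := blockStart_le A p
        omega
      have same : ∀ p q : Fin (n + 1), p < q → ¬ IsLinked A (p + 1) →
          blockStart A p ≠ blockStart A q := fun p q hpq hp h =>
        hp ((blockStart_succ_eq_iff A p).1 ((blockStart_eq_of_le_of_le A
          (by have := blockStart_le A p; omega) (Fin.lt_def.1 hpq)).trans h.symm))
      split_ifs at hpq with hp hq hq <;> simp only [Fin.mk.injEq] at hpq
      · exact Fin.ext (by omega)
      · exact absurd hpq (key p q hp hq)
      · exact absurd hpq.symm (key q p hq hp)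
      · rcases lt_trichotomy p q with h | h | h
        · exact absurd hpq (same p q h hp)
        · exact h
        · exact absurd hpq.symm (same q p h hq))

theorem blockStart_blockCycle (p : Fin (n + 1)) :
    blockStart A (blockCycle A p) = blockStart A p := by
  simp only [blockCycle, Equiv.ofBijective_apply]
  split_ifs with h
  · exact (blockStart_succ_eq_iff A p).2 h
  · exact blockStart_blockStart A p

theorem blockCycle_mem_WP (hA : A ⊆ PiA n) : blockCycle A ∈ WP n A :=
  (mem_WP_iff hA _).2 (blockStart_blockCycle A)

theorem mem_orbit_blockCycle {p q : Fin (n + 1)} (h : blockStart A p = blockStart A q) :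
    q ∈ MulAction.orbit (Subgroup.zpowers (blockCycle A)) p := by
  have horbit : ∀ p q : Fin (n + 1), blockStart A p = blockStart A q → p < q →
      q ∈ MulAction.orbit (Subgroup.zpowers (blockCycle A)) p := fun p q =>
    rel_of_blockStart_eq A (fun p q => q ∈ MulAction.orbit (Subgroup.zpowers (blockCycle A)) p)
      (fun _ _ _ hab hbc => (MulAction.orbit_eq_iff.2 hab).symm ▸ hbc) fun i hi =>
      ⟨⟨_, Subgroup.mem_zpowers _⟩, by
        have : IsLinked A (i.castSucc + 1) := (isLinked_succ_iff A i).2 hi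
        change blockCycle A i.castSucc = i.succ
        simp only [blockCycle, Equiv.ofBijective_apply, dif_pos this]
        rfl⟩
  rcases lt_trichotomy p q with hpq | rfl | hpq
  · exact horbit p q h hpq
  · exact MulAction.mem_orbit_self p
  · exact MulAction.mem_orbit_symm.1 (horbit q p h.symm hpq)

end BlockCycle

section FitsInto

def FitsInto (A B : Finset (RootA n)) : Prop :=
  ∃ φ : WA n, ∀ p q : Fin (n + 1), blockStart A p = blockStart A q →
    blockStart B (φ p) = blockStart B (φ q)

def blockLeader (J : Finset (RootA n)) (p : Fin (n + 1)) : Fin (n + 1) :=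
  ⟨blockStart J p, (blockStart_le J p).trans_lt p.isLt⟩

variable {A B : Finset (RootA n)}

theorem fitsInto_of_permChar_blockCycle_ne_zero (hB : B ⊆ PiA n)
    (h : permChar B (blockCycle A) ≠ 0) : FitsInto A B := by
  obtain ⟨d, hd⟩ := Finset.card_ne_zero.1 (by simpa [permChar] using h)
  refine ⟨d⁻¹, fun p q hpq => ?_⟩
  obtain ⟨⟨_, k, rfl⟩, rfl⟩ := mem_orbit_blockCycle A hpq
  have hk : (d⁻¹ * blockCycle A * d⁻¹⁻¹) ^ k ∈ WP n B :=
    zpow_mem (by simpa using (mem_fixedReps.1 hd).2) k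
  rw [conj_zpow] at hk
  simpa [Subgroup.smul_def] using (blockStart_apply_eq_of_mem_WP hB hk (d⁻¹ p)).symm

theorem permChar_blockCycle_ne_zero (hA : A ⊆ PiA n) : permChar A (blockCycle A) ≠ 0 := by
  have : (1 : WA n) ∈ fixedReps A (blockCycle A) :=
    mem_fixedReps.2 ⟨one_mem_XP hA, by simpa using blockCycle_mem_WP A hA⟩
  simpa [permChar] using Finset.ne_empty_of_mem this

theorem blockStart_blockLeader (J : Finset (RootA n)) (p : Fin (n + 1)) :
    blockStart J (blockLeader J p) = blockStart J p :=
  blockStart_blockStart J p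

theorem card_add_card_image_blockLeader (hA : A ⊆ PiA n) :
    A.card + (Finset.univ.image (blockLeader A)).card = n + 1 := by
  have himage : Finset.univ.image (blockLeader A) =
      Finset.univ.filter fun p : Fin (n + 1) => ¬ IsLinked A p := by
    ext p
    simp only [Finset.mem_image, Finset.mem_univ, true_and, Finset.mem_filter,
      ← blockStart_eq_self_iff]
    refine ⟨?_, fun h => ⟨p, Fin.ext h⟩⟩
    rintro ⟨q, rfl⟩
    exact blockStart_blockLeader A q
  have hroots : A.card = (Finset.univ.filter fun p : Fin (n + 1) => IsLinked A p).card := by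
    refine Finset.card_bij (fun r _ => r.2) (fun r hr => ?_) (fun r hr r' hr' h => ?_)
      fun p hp => ?_
    · obtain ⟨i, rfl⟩ := mem_PiA_iff.1 (hA hr)
      simpa using (isLinked_succ_iff A i).2 hr
    · obtain ⟨i, rfl⟩ := mem_PiA_iff.1 (hA hr)
      obtain ⟨j, rfl⟩ := mem_PiA_iff.1 (hA hr')
      obtain rfl := Fin.succ_injective _ h
      rfl
    · obtain ⟨i, hi, hiA⟩ := (Finset.mem_filter.1 hp).2
      exact ⟨_, hiA, Fin.ext (by simpa using hi)⟩
  rw [himage, hroots, Finset.card_filter_add_card_filter_not, Finset.card_univ, Fintype.card_fin]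

theorem image_blockLeader_eq {φ : WA n}
    (hφ : ∀ p q : Fin (n + 1), blockStart A p = blockStart A q →
      blockStart B (φ p) = blockStart B (φ q)) :
    Finset.univ.image (blockLeader B) =
      (Finset.univ.image (blockLeader A)).image fun l => blockLeader B (φ l) := by
  calc Finset.univ.image (blockLeader B)
      = (Finset.univ.image φ).image (blockLeader B) := by rw [Finset.image_univ_equiv]
    _ = _ := by
      rw [Finset.image_image, Finset.image_image]
      exact Finset.image_congr fun p _ => Fin.ext (hφ _ _ (blockStart_blockLeader A p)).symm

theorem FitsInto.card_le (hA : A ⊆ PiA n) (hB : B ⊆ PiA n) (h : FitsInto A B) :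
    A.card ≤ B.card := by
  obtain ⟨φ, hφ⟩ := h
  have := (image_blockLeader_eq hφ).symm ▸
    Finset.card_image_le (s := Finset.univ.image (blockLeader A))
      (f := fun l => blockLeader B (φ l))
  have := card_add_card_image_blockLeader hA
  have := card_add_card_image_blockLeader hB
  omega

/-- With as many blocks in `A` as in `B`, the map they induce on blocks is a bijection. -/
theorem blockStart_eq_of_blockStart_apply_eq (hA : A ⊆ PiA n) (hB : B ⊆ PiA n)
    (hcard : A.card = B.card) {φ : WA n}
    (hφ : ∀ p q : Fin (n + 1), blockStart A p = blockStart A q →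
      blockStart B (φ p) = blockStart B (φ q))
    {p q : Fin (n + 1)} (h : blockStart B (φ p) = blockStart B (φ q)) :
    blockStart A p = blockStart A q := by
  have hinj : Set.InjOn (fun l => blockLeader B (φ l)) (Finset.univ.image (blockLeader A)) := by
    refine Finset.injOn_of_card_image_eq ?_
    rw [← image_blockLeader_eq hφ]
    have := card_add_card_image_blockLeader hA
    have := card_add_card_image_blockLeader hB
    omega
  have := hinj (Finset.mem_image_of_mem _ (Finset.mem_univ p))
    (Finset.mem_image_of_mem _ (Finset.mem_univ q)) (Fin.ext (by
      change blockStart B (φ (blockLeader A p)) = blockStart B (φ (blockLeader A q))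
      rw [hφ _ p (blockStart_blockLeader A p), hφ _ q (blockStart_blockLeader A q), h]))
  simpa [blockLeader] using this

/-- If the blocks of `A` fit into those of `B` and there are as many of each, a permutation
increasing on the blocks of `A` maps them onto the blocks of `B` without gaps, hence maps `A`
onto `B`. -/
theorem FitsInto.equivJ (hA : A ⊆ PiA n) (hB : B ⊆ PiA n) (h : FitsInto A B)
    (hcard : A.card = B.card) : EquivJ n A B := by
  obtain ⟨φ, hφ⟩ := h
  set v := cosetRep A φ
  have hvA : v ∈ XP n A := cosetRep_mem_XP hA φ
  have hσ := (mem_WP_iff hA _).1 (inv_mul_cosetRep_mem_WP hA φ)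
  have hv : ∀ p q : Fin (n + 1), blockStart A p = blockStart A q →
      blockStart B (v p) = blockStart B (v q) :=
    fun p q hpq => by
      have hvp : ∀ p, v p = φ ((φ⁻¹ * v) p) := fun p => by simp
      rw [hvp p, hvp q]
      exact hφ _ _ (by rw [hσ p, hσ q, hpq])
  have hvXD : v ∈ XD n B A := by
    refine mem_XD_iff.2 ⟨(mem_XP_iff hB _).2 fun j hj => ?_, hvA⟩
    have hroot := ((blockStart_castSucc_eq_iff B j).2 hj).symm
    have hb := blockStart_eq_of_blockStart_apply_eq hA hB hcard hv (p := v⁻¹ j.castSucc)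
      (q := v⁻¹ j.succ) (by simpa using hroot)
    by_contra! hle
    have := apply_lt_apply_of_mem_XP hA hvA hb.symm
      (hle.lt_of_ne (v⁻¹.injective.ne Fin.castSucc_lt_succ.ne'))
    simp only [Equiv.Perm.coe_inv, Equiv.apply_symm_apply] at this
    exact this.not_gt Fin.castSucc_lt_succ
  have hsub : A.image (act n v) ⊆ B := by
    intro r hr
    obtain ⟨r, hrA, rfl⟩ := Finset.mem_image.1 hr
    obtain ⟨i, rfl⟩ := mem_PiA_iff.1 (hA hrA)
    have hblock := ((blockStart_castSucc_eq_iff A i).2 hrA).symm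
    exact act_mem_of_blockStart_eq hB hA hvXD le_rfl le_rfl hblock (hv _ _ hblock)
  refine ⟨v, (Finset.eq_of_subset_of_card_le hsub ?_).symm⟩
  rw [Finset.card_image_of_injective _ (act_injective v), hcard]

end FitsInto

section Classes

def parabolicClasses (n : ℕ) : Set (Quot (EquivJ n)) :=
  {q | ∃ A ⊆ PiA n, Quot.mk _ A = q}

/-- A subset of `Π` in the class `q`, and `∅` if there is none. -/
def classRep (q : Quot (EquivJ n)) : Finset (RootA n) :=
  if h : q ∈ parabolicClasses n then h.choose else ∅

theorem classRep_subset (q : Quot (EquivJ n)) : classRep q ⊆ PiA n := by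
  unfold classRep
  split_ifs with h
  · exact h.choose_spec.1
  · exact Finset.empty_subset _

theorem mk_classRep {q : Quot (EquivJ n)} (hq : q ∈ parabolicClasses n) :
    Quot.mk _ (classRep q) = q := by
  rw [classRep, dif_pos hq]
  exact hq.choose_spec.2

def classChar (q : Quot (EquivJ n)) : WA n → ℚ :=
  permChar (classRep q)

theorem permChar_eq_of_equivJ {A A' : Finset (RootA n)} (hA : A ⊆ PiA n) (hA' : A' ⊆ PiA n)
    (h : EquivJ n A A') : permChar A' = permChar A := by
  obtain ⟨v, rfl⟩ := h
  exact permChar_image_act hA hA'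

theorem classChar_mk {A : Finset (RootA n)} (hA : A ⊆ PiA n) :
    classChar (Quot.mk _ A) = permChar A :=
  permChar_eq_of_equivJ hA (classRep_subset _)
    (quot_mk_eq_iff.1 (mk_classRep ⟨A, hA, rfl⟩).symm)

theorem linearIndepOn_classChar : LinearIndepOn ℚ classChar (parabolicClasses n) := by
  refine linearIndepOn_of_apply_ne_zero (fun q => blockCycle (classRep q))
    (fun q => (classRep q).card) (fun q _ => permChar_blockCycle_ne_zero (classRep_subset q))
    fun q hq q' hq' hne h => ?_
  have hfits := fitsInto_of_permChar_blockCycle_ne_zero (classRep_subset q') h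
  refine (hfits.card_le (classRep_subset q) (classRep_subset q')).lt_of_ne fun hcard => hne ?_
  rw [← mk_classRep hq, ← mk_classRep hq']
  exact (quot_mk_eq_iff.2 (hfits.equivJ (classRep_subset q) (classRep_subset q') hcard)).symm

/-- The expansion `Σ_{L ⊆ B} a_{ABL} [x_L]` of the product `[x_A][x_B]`. -/
def mulExpansion (A B : Finset (RootA n)) : Quot (EquivJ n) →₀ ℚ :=
  ∑ L ∈ B.powerset, (aC n A B L : ℚ) • Finsupp.single (Quot.mk _ L) 1

theorem mulExpansion_mem_supported {A B : Finset (RootA n)} (hB : B ⊆ PiA n) :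
    mulExpansion A B ∈ Finsupp.supported ℚ ℚ (parabolicClasses n) :=
  Submodule.sum_mem _ fun L hL => Submodule.smul_mem _ _ (Finsupp.single_mem_supported ℚ _
    ⟨L, (Finset.mem_powerset.1 hL).trans hB, rfl⟩)

theorem linearCombination_mulExpansion {A B : Finset (RootA n)} (hA : A ⊆ PiA n)
    (hB : B ⊆ PiA n) :
    Finsupp.linearCombination ℚ classChar (mulExpansion A B) = permChar A * permChar B := by
  rw [permChar_mul hA hB, mulExpansion, map_sum]
  refine Finset.sum_congr rfl fun L hL => ?_
  rw [map_smul, Finsupp.linearCombination_single, one_smul,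
    classChar_mk ((Finset.mem_powerset.1 hL).trans hB)]

theorem mulExpansion_apply (A B L₀ : Finset (RootA n)) :
    mulExpansion A B (Quot.mk _ L₀) =
      ∑ L ∈ B.powerset.filter (fun L => EquivJ n L L₀), (aC n A B L : ℚ) := by
  simp [mulExpansion, Finsupp.finsetSum_apply, Finsupp.single_apply, quot_mk_eq_iff,
    Finset.sum_filter]

theorem classChar_mul_mem_span (q q' : Quot (EquivJ n)) :
    classChar q * classChar q' ∈ Submodule.span ℚ (classChar '' parabolicClasses n) :=
  (Finsupp.mem_span_image_iff_linearCombination ℚ).2 ⟨_, mulExpansion_mem_supported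
    (classRep_subset q'), linearCombination_mulExpansion (classRep_subset q) (classRep_subset q')⟩

end Classes

end WeylA

open WeylA in
theorem new_descent_algebra_well_defined_general (n : ℕ)
    (J J' K K' : Finset (RootA n))
    (hJ : J ⊆ PiA n) (hJ' : J' ⊆ PiA n) (hK : K ⊆ PiA n) (hK' : K' ⊆ PiA n)
    (hJJ' : EquivJ n J J') (hKK' : EquivJ n K K') :
    (∀ L₀ ⊆ PiA n,
      ∑ L ∈ K.powerset.filter (fun L => EquivJ n L L₀), aC n J K L =
        ∑ L' ∈ K'.powerset.filter (fun L' => EquivJ n L' L₀), aC n J' K' L') ∧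
    ∃ mul : (Quot (EquivJ n) →₀ ℚ) →ₗ[ℚ]
        (Quot (EquivJ n) →₀ ℚ) →ₗ[ℚ] (Quot (EquivJ n) →₀ ℚ),
      (∀ A B : Finset (RootA n), A ⊆ PiA n → B ⊆ PiA n →
        mul (Finsupp.single (Quot.mk (EquivJ n) A) 1)
            (Finsupp.single (Quot.mk (EquivJ n) B) 1) =
          ∑ L ∈ B.powerset,
            (aC n A B L : ℚ) • Finsupp.single (Quot.mk (EquivJ n) L) 1) ∧
      ∀ x y z : Quot (EquivJ n) →₀ ℚ, mul (mul x y) z = mul x (mul y z) := by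
  have hinj := linearIndepOn_iffₛ.1 (linearIndepOn_classChar (n := n))
  have hexp : mulExpansion J K = mulExpansion J' K' := hinj _ (mulExpansion_mem_supported hK) _
    (mulExpansion_mem_supported hK') (by
      rw [linearCombination_mulExpansion hJ hK, linearCombination_mulExpansion hJ' hK',
        permChar_eq_of_equivJ hJ hJ' hJJ', permChar_eq_of_equivJ hK hK' hKK'])
  refine ⟨fun L₀ _ => ?_, ?_⟩
  · have := congrArg (· (Quot.mk _ L₀)) hexp
    simp only [mulExpansion_apply] at this
    exact_mod_cast this
  obtain ⟨mul, hmul, hassoc⟩ :=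
    exists_mul_of_linearIndepOn linearIndepOn_classChar classChar_mul_mem_span
  refine ⟨mul, fun A B hA hB => hinj _ (hmul _ _).1 _ (mulExpansion_mem_supported hB) ?_, hassoc⟩
  rw [(hmul _ _).2, ← mulExpansion, linearCombination_mulExpansion hA hB]
  simp [classChar_mk hA, classChar_mk hB]

/-- if `J ~ J'` and `K ~ K'` (all subsets of `Π`), then for every `L₀ ⊆ Π`,
`Σ_{L ⊆ K, L ~ L₀} a_{JKL} = Σ_{L' ⊆ K', L' ~ L₀} a_{J'K'L'}`.  Consequently the
multiplication `[x_J][x_K] = Σ_{L ⊆ K} a_{JKL} [x_L]` on equivalence classes is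
well-defined, and the rational span `Σ_W(Aₙ) = Sp{[x_J] : J ⊆ Π}` of the equivalence
classes (realized as the free `ℚ`-module on the classes `Quot.mk (EquivJ n) J`) carries a
`ℚ`-bilinear associative multiplication given by these structure constants, i.e. it is an
algebra over `ℚ`. -/
theorem new_descent_algebra_well_defined (n : ℕ) (hn : 1 ≤ n)
    (J J' K K' : Finset (RootA n))
    (hJ : J ⊆ PiA n) (hJ' : J' ⊆ PiA n) (hK : K ⊆ PiA n) (hK' : K' ⊆ PiA n)
    (hJJ' : EquivJ n J J') (hKK' : EquivJ n K K') :
    (∀ L₀ ⊆ PiA n,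
      ∑ L ∈ K.powerset.filter (fun L => EquivJ n L L₀), aC n J K L =
        ∑ L' ∈ K'.powerset.filter (fun L' => EquivJ n L' L₀), aC n J' K' L') ∧
    ∃ mul : (Quot (EquivJ n) →₀ ℚ) →ₗ[ℚ]
        (Quot (EquivJ n) →₀ ℚ) →ₗ[ℚ] (Quot (EquivJ n) →₀ ℚ),
      (∀ A B : Finset (RootA n), A ⊆ PiA n → B ⊆ PiA n →
        mul (Finsupp.single (Quot.mk (EquivJ n) A) 1)
            (Finsupp.single (Quot.mk (EquivJ n) B) 1) =
          ∑ L ∈ B.powerset,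
            (aC n A B L : ℚ) • Finsupp.single (Quot.mk (EquivJ n) L) 1) ∧
      ∀ x y z : Quot (EquivJ n) →₀ ℚ, mul (mul x y) z = mul x (mul y z) :=
  new_descent_algebra_well_defined_general n J J' K K' hJ hJ' hK hK' hJJ' hKK'
end
end

section
/- Let K ⊆ Π, and let P ⊆ N ⊆ J ⊆ Π. Then the structure constants satisfy the identity a_{KNP} = Σ_{M ⊆ J} a_{KJM} · a^J_{MNP}. -/
open scoped Classical

noncomputable section

/-!
Every `w ∈ W` factors uniquely as `w = u * v` with `u ∈ X_J` and `v ∈ W_J`. In type `A` the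
orbits of `W_J` on `{0, …, n}` are the blocks of consecutive integers joined by roots of `J`:
elements of `W_J` preserve the blocks and elements of `X_J` are increasing on them. Comparing
positions inside and across blocks shows that `w` is counted by `a_{KNP}` exactly when `u` is
counted by `a_{KJM}` and `v` by `a^J_{MNP}`, where `M = u⁻¹(K) ∩ J`. Summing over the fibres of
`u ↦ M` gives the identity.
-/

open Finset

namespace WeylA

variable {n : ℕ}

lemma mem_PiA {p : RootA n} : p ∈ PiA n ↔ p.2.val = p.1.val + 1 := by
  constructor
  · intro hp
    obtain ⟨i, -, rfl⟩ := mem_image.mp hp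
    simp
  · intro h
    refine mem_image.mpr ⟨⟨p.1.val, by omega⟩, mem_univ _, ?_⟩
    ext <;> simp [h]

lemma mem_XP {J : Finset (RootA n)} {w : WA n} : w ∈ XP n J ↔ ∀ r ∈ J, w r.1 < w r.2 := by
  simp [XP, IsPos, act]

lemma mem_XD {J K : Finset (RootA n)} {w : WA n} :
    w ∈ XD n J K ↔ w⁻¹ ∈ XP n J ∧ w ∈ XP n K := by
  simp [XD]

/-- The classes of this relation are the orbits of `W_J`. -/
def SameBlock (J : Finset (RootA n)) (x y : Fin (n + 1)) : Prop :=
  ∀ k : ℕ, min x.val y.val ≤ k → k < max x.val y.val →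
    ∃ p ∈ J, p.1.val = k ∧ p.2.val = k + 1

namespace SameBlock

variable {J : Finset (RootA n)} {x y z : Fin (n + 1)}

lemma refl (x : Fin (n + 1)) : SameBlock J x x := fun k h₁ h₂ => by omega

lemma symm (h : SameBlock J x y) : SameBlock J y x := fun k h₁ h₂ =>
  h k (by omega) (by omega)

lemma trans (hxy : SameBlock J x y) (hyz : SameBlock J y z) : SameBlock J x z :=
  fun k h₁ h₂ => by
  by_cases hk : min x.val y.val ≤ k ∧ k < max x.val y.val
  · exact hxy k hk.1 hk.2
  · exact hyz k (by omega) (by omega)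

lemma of_mem (hJ : J ⊆ PiA n) {p : RootA n} (hp : p ∈ J) : SameBlock J p.1 p.2 := by
  have := mem_PiA.mp (hJ hp)
  exact fun k _ _ => ⟨p, hp, by omega, by omega⟩

lemma apply_of_mem_WP (hJ : J ⊆ PiA n) {σ : WA n} (hσ : σ ∈ WP n J) (x : Fin (n + 1)) :
    SameBlock J x (σ x) := by
  induction hσ using Subgroup.closure_induction generalizing x with
  | mem _ hσ =>
    obtain ⟨p, hp, rfl⟩ := hσ
    rcases eq_or_ne x p.1 with rfl | h₁
    · simpa using of_mem hJ hp
    rcases eq_or_ne x p.2 with rfl | h₂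
    · simpa using (of_mem hJ hp).symm
    · simpa [Equiv.swap_apply_of_ne_of_ne h₁ h₂] using refl x
  | one => exact refl x
  | mul σ τ _ _ hσ hτ => exact (hτ x).trans (hσ (τ x))
  | inv σ _ hσ => simpa using (hσ (σ⁻¹ x)).symm

lemma apply_apply_of_mem_WP (hJ : J ⊆ PiA n) {σ : WA n} (hσ : σ ∈ WP n J)
    (h : SameBlock J x y) : SameBlock J (σ x) (σ y) :=
  ((apply_of_mem_WP hJ hσ x).symm.trans h).trans (apply_of_mem_WP hJ hσ y)

end SameBlock

section Blocks

variable {J : Finset (RootA n)} {u : WA n} {x y : Fin (n + 1)}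

lemma apply_lt_apply_of_sameBlock (hu : u ∈ XP n J) (h : SameBlock J x y) (hxy : x < y) :
    u x < u y := by
  induction y using Fin.induction with
  | zero => exact absurd hxy (Fin.not_lt_zero x)
  | succ k ih =>
    have hk : (k.succ : ℕ) = k + 1 := Fin.val_succ k
    have hxk : (x : ℕ) < k + 1 := hk ▸ hxy
    have hstep : u k.castSucc < u k.succ := by
      obtain ⟨p, hp, h₁, h₂⟩ := h k (by omega) (by omega)
      have hpk : p = (k.castSucc, k.succ) := by ext <;> simp [h₁, h₂]
      have := mem_XP.mp hu p hp
      rwa [hpk] at this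
    rcases (Fin.le_castSucc_iff.mpr hxy).eq_or_lt with rfl | hlt
    · exact hstep
    · have hxk' : SameBlock J x k.castSucc := fun m h₁ h₂ =>
        h m (by omega) (by simp only [Fin.val_castSucc] at h₂; omega)
      exact (ih hxk' hlt).trans hstep

lemma apply_lt_apply_iff_of_sameBlock (hu : u ∈ XP n J) (h : SameBlock J x y) :
    u x < u y ↔ x < y := by
  refine ⟨fun huxy => ?_, apply_lt_apply_of_sameBlock hu h⟩
  rcases lt_trichotomy x y with hxy | rfl | hyx
  · exact hxy
  · exact absurd huxy (lt_irrefl _)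
  · exact absurd (apply_lt_apply_of_sameBlock hu h.symm hyx) huxy.not_gt

/-- Distinct blocks are intervals, so they are ordered as wholes. -/
lemma lt_iff_of_not_sameBlock (h : ¬ SameBlock J x y) {x' y' : Fin (n + 1)}
    (hx : SameBlock J x x') (hy : SameBlock J y y') : x' < y' ↔ x < y := by
  simp only [SameBlock, not_forall] at h
  obtain ⟨k, h₁, h₂, hk⟩ := h
  have side : ∀ {a b : Fin (n + 1)}, SameBlock J a b → (a.val ≤ k ↔ b.val ≤ k) :=
    fun hab => ⟨fun ha => by by_contra hb; exact hk (hab k (by omega) (by omega)),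
      fun hb => by by_contra ha; exact hk (hab k (by omega) (by omega))⟩
  have := side hx
  have := side hy
  rw [Fin.lt_def, Fin.lt_def]
  omega

lemma apply_lt_apply_iff_of_not_sameBlock (hJ : J ⊆ PiA n) {v : WA n} (hv : v ∈ WP n J)
    (h : ¬ SameBlock J x y) : v x < v y ↔ x < y :=
  lt_iff_of_not_sameBlock h (.apply_of_mem_WP hJ hv x) (.apply_of_mem_WP hJ hv y)

/-- A point strictly between `x` and `y` would be sent strictly between `u x` and `u y`. -/
lemma mem_of_sameBlock_of_val_succ (hu : u ∈ XP n J) (h : SameBlock J x y)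
    (hsucc : (u y : ℕ) = u x + 1) : (x, y) ∈ J := by
  have hxy : (x : ℕ) < y :=
    (apply_lt_apply_iff_of_sameBlock hu h).mp (Fin.lt_def.mpr (by omega))
  have hy : (y : ℕ) = x + 1 := by
    by_contra hne
    let m : Fin (n + 1) := ⟨x + 1, by omega⟩
    have hm : (m : ℕ) = x + 1 := rfl
    have h₁ : u x < u m := apply_lt_apply_of_sameBlock hu
      (fun k h₁ h₂ => h k (by omega) (by omega)) (Fin.lt_def.mpr (by omega))
    have h₂ : u m < u y := apply_lt_apply_of_sameBlock hu
      (fun k h₁ h₂ => h k (by omega) (by omega)) (Fin.lt_def.mpr (by omega))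
    rw [Fin.lt_def] at h₁ h₂
    omega
  obtain ⟨p, hp, h₁, h₂⟩ := h x (by omega) (by omega)
  have hpxy : p = (x, y) := by ext <;> simp [h₁, h₂, hy]
  rwa [hpxy] at hp

lemma act_inv_mem_of_sameBlock (hu : u ∈ XP n J) {r : RootA n} (hr : r ∈ PiA n)
    (h : SameBlock J (u⁻¹ r.1) (u⁻¹ r.2)) : act n u⁻¹ r ∈ J :=
  mem_of_sameBlock_of_val_succ hu h (by simpa using mem_PiA.mp hr)

end Blocks

section Factorization

variable {J : Finset (RootA n)}

/-- Right multiplication by the transposition of an adjacent descent `a, b` of `f` strictly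
increases this weight, so a maximiser over a coset `w W_J` has no descents in `J`. -/
def weight (f : WA n) : ℤ := ∑ i : Fin (n + 1), (i : ℤ) * (f i : ℤ)

lemma weight_mul_swap (f : WA n) {a b : Fin (n + 1)} (hab : a ≠ b) :
    weight (f * Equiv.swap a b) = weight f + ((b : ℤ) - a) * ((f a : ℤ) - f b) := by
  have hreindex : weight (f * Equiv.swap a b) =
      ∑ i, (Equiv.swap a b i : ℤ) * (f i : ℤ) := by
    rw [weight, ← Equiv.sum_comp (Equiv.swap a b)]
    simp
  have hdiff :
      ∑ i, ((Equiv.swap a b i : ℤ) - i) * (f i : ℤ) =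
        ((b : ℤ) - a) * ((f a : ℤ) - f b) := by
    rw [Fintype.sum_eq_add a b hab fun c hc => by simp [Equiv.swap_apply_of_ne_of_ne hc.1 hc.2]]
    simp only [Equiv.swap_apply_left, Equiv.swap_apply_right]
    ring
  rw [hreindex, weight, ← hdiff, ← sum_add_distrib]
  exact sum_congr rfl fun i _ => by ring

lemma exists_mul_mem_XP (hJ : J ⊆ PiA n) (w : WA n) : ∃ v ∈ WP n J, w * v ∈ XP n J := by
  obtain ⟨v, hv, hmax⟩ := ({v | v ∈ WP n J} : Finset (WA n)).exists_max_image
    (fun v => weight (w * v)) ⟨1, by simp [one_mem]⟩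
  simp only [mem_filter, mem_univ, true_and] at hv hmax
  refine ⟨v, hv, mem_XP.mpr fun r hr => ?_⟩
  have hr' := mem_PiA.mp (hJ hr)
  have hne : r.1 ≠ r.2 := fun h => by rw [h] at hr'; omega
  by_contra hdesc
  have hlt : (w * v) r.2 < (w * v) r.1 :=
    lt_of_le_of_ne (not_lt.mp hdesc) fun h => hne ((w * v).injective h).symm
  have hle := hmax (v * Equiv.swap r.1 r.2) (mul_mem hv (Subgroup.subset_closure ⟨r, hr, rfl⟩))
  rw [← mul_assoc, weight_mul_swap _ hne] at hle
  rw [Fin.lt_def] at hlt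
  have : (0 : ℤ) < ((r.2 : ℤ) - r.1) * (((w * v) r.1 : ℤ) - (w * v) r.2) :=
    mul_pos (by omega) (by omega)
  linarith

lemma eq_one_of_strictMono {σ : WA n} (h : StrictMono σ) : σ = 1 :=
  Equiv.ext <| congrFun <| (h.range_inj strictMono_id).mp (by simp [σ.surjective.range_eq])

lemma eq_one_of_mem_XP_of_mul_mem_XP (hJ : J ⊆ PiA n) {u v : WA n} (hu : u ∈ XP n J)
    (hv : v ∈ WP n J) (huv : u * v ∈ XP n J) : v = 1 := by
  refine eq_one_of_strictMono fun x y hxy => ?_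
  by_cases h : SameBlock J x y
  · rw [← apply_lt_apply_iff_of_sameBlock hu (h.apply_apply_of_mem_WP hJ hv)]
    exact apply_lt_apply_of_sameBlock (u := u * v) huv h hxy
  · exact (apply_lt_apply_iff_of_not_sameBlock hJ hv h).mpr hxy

/-- Counting through the factorisation `W = X_J · W_J`, `(u, v) ↦ u * v`. -/
lemma card_filter_eq_sum_card_filter_mul (hJ : J ⊆ PiA n) (p : WA n → Prop)
    [DecidablePred p] :
    #{w | p w} = ∑ u ∈ XP n J, #{v | v ∈ WP n J ∧ p (u * v)} := by
  rw [← card_sigma]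
  symm
  refine card_bij (fun x _ => x.1 * x.2) ?_ ?_ ?_
  · rintro ⟨u, v⟩ h
    simp only [mem_sigma, mem_filter, mem_univ, true_and] at h ⊢
    exact h.2.2
  · rintro ⟨u₁, v₁⟩ h₁ ⟨u₂, v₂⟩ h₂ heq
    simp only [mem_sigma, mem_filter, mem_univ, true_and] at h₁ h₂ heq
    have hv : v₂ * v₁⁻¹ = 1 := eq_one_of_mem_XP_of_mul_mem_XP hJ h₂.1
      (mul_mem h₂.2.1 (inv_mem h₁.2.1))
      (by rw [← mul_assoc, ← heq, mul_inv_cancel_right]; exact h₁.1)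
    obtain rfl := (mul_inv_eq_one.mp hv).symm
    obtain rfl := mul_right_cancel heq
    rfl
  · intro w hw
    obtain ⟨v, hv, hwv⟩ := exists_mul_mem_XP hJ w
    refine ⟨⟨w * v, v⁻¹⟩, ?_, mul_inv_cancel_right w v⟩
    simp only [mem_filter, mem_univ, true_and, mem_sigma] at hw ⊢
    exact ⟨hwv, inv_mem hv, by rwa [mul_inv_cancel_right]⟩

end Factorization

section Coset

variable {J K N : Finset (RootA n)} {u v : WA n}

lemma inv_mul_mem_XP_iff (hK : K ⊆ PiA n) (hJ : J ⊆ PiA n) (hu : u ∈ XP n J)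
    (hv : v ∈ WP n J) :
    (u * v)⁻¹ ∈ XP n K ↔
      u⁻¹ ∈ XP n K ∧ v⁻¹ ∈ XP n (K.image (act n u⁻¹) ∩ J) := by
  have across : ∀ r : RootA n, ¬ SameBlock J (u⁻¹ r.1) (u⁻¹ r.2) →
      (v⁻¹ (u⁻¹ r.1) < v⁻¹ (u⁻¹ r.2) ↔ u⁻¹ r.1 < u⁻¹ r.2) :=
    fun r h => apply_lt_apply_iff_of_not_sameBlock hJ (inv_mem hv) h
  simp only [mem_XP, mul_inv_rev, Equiv.Perm.mul_apply]
  constructor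
  · intro h
    refine ⟨fun r hr => ?_, ?_⟩
    · by_cases hb : SameBlock J (u⁻¹ r.1) (u⁻¹ r.2)
      · have := mem_PiA.mp (hK hr)
        rw [← apply_lt_apply_iff_of_sameBlock hu hb]
        simp [Fin.lt_def, this]
      · exact (across r hb).mp (h r hr)
    · intro s hs
      obtain ⟨r, hr, rfl⟩ := mem_image.mp (mem_inter.mp hs).1
      exact h r hr
  · rintro ⟨huK, hvM⟩ r hr
    by_cases hb : SameBlock J (u⁻¹ r.1) (u⁻¹ r.2)
    · exact hvM _
        (mem_inter.mpr ⟨mem_image_of_mem _ hr, act_inv_mem_of_sameBlock hu (hK hr) hb⟩)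
    · exact (across r hb).mpr (huK r hr)

lemma mul_mem_XP_iff (hJ : J ⊆ PiA n) (hNJ : N ⊆ J) (hu : u ∈ XP n J) (hv : v ∈ WP n J) :
    u * v ∈ XP n N ↔ v ∈ XP n N := by
  simp only [mem_XP, Equiv.Perm.mul_apply]
  exact forall₂_congr fun r hr => apply_lt_apply_iff_of_sameBlock hu
    ((SameBlock.of_mem hJ (hNJ hr)).apply_apply_of_mem_WP hJ hv)

lemma image_act_inv_mul_inter (hK : K ⊆ PiA n) (hJ : J ⊆ PiA n) (hNJ : N ⊆ J)
    (hu : u ∈ XP n J) (hv : v ∈ WP n J) :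
    K.image (act n (u * v)⁻¹) ∩ N =
      (K.image (act n u⁻¹) ∩ J).image (act n v⁻¹) ∩ N := by
  have hact : ∀ r, act n (u * v)⁻¹ r = act n v⁻¹ (act n u⁻¹ r) := fun r => by
    simp [act, mul_inv_rev]
  ext t
  simp only [mem_inter, mem_image]
  constructor
  · rintro ⟨⟨r, hr, rfl⟩, htN⟩
    have hb : SameBlock J (u⁻¹ r.1) (u⁻¹ r.2) := by
      simpa [act] using (SameBlock.of_mem hJ (hNJ htN)).apply_apply_of_mem_WP hJ hv
    exact ⟨⟨act n u⁻¹ r, ⟨⟨r, hr, rfl⟩, act_inv_mem_of_sameBlock hu (hK hr) hb⟩,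
      (hact r).symm⟩, htN⟩
  · rintro ⟨⟨s, ⟨⟨r, hr, rfl⟩, -⟩, rfl⟩, htN⟩
    exact ⟨⟨r, hr, hact r⟩, htN⟩

lemma card_filter_mul_eq_ite (hK : K ⊆ PiA n) (hJ : J ⊆ PiA n) (hNJ : N ⊆ J)
    (hu : u ∈ XP n J) (P : Finset (RootA n)) :
    #{v | v ∈ WP n J ∧ (u * v ∈ XD n K N ∧ K.image (act n (u * v)⁻¹) ∩ N = P)} =
      if u ∈ XD n K J then aCrel n J (K.image (act n u⁻¹) ∩ J) N P else 0 := by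
  split_ifs with huK
  · rw [mem_XD] at huK
    unfold aCrel
    congr 1
    ext v
    simp only [mem_filter, mem_univ, true_and, mem_XD]
    by_cases hv : v ∈ WP n J
    · rw [inv_mul_mem_XP_iff hK hJ hu hv, mul_mem_XP_iff hJ hNJ hu hv,
        image_act_inv_mul_inter hK hJ hNJ hu hv]
      simp [hv, huK.1]
    · simp [hv]
  · rw [card_eq_zero, filter_eq_empty_iff]
    rintro v - ⟨hv, hw, -⟩
    exact huK (mem_XD.mpr ⟨((inv_mul_mem_XP_iff hK hJ hu hv).mp (mem_XD.mp hw).1).1, hu⟩)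

end Coset

end WeylA

open WeylA in
theorem structure_constants_identity_general (n : ℕ) (K N J P : Finset (RootA n))
    (hK : K ⊆ PiA n) (hNJ : N ⊆ J) (hJ : J ⊆ PiA n) :
    aC n K N P = ∑ M ∈ J.powerset, aC n K J M * aCrel n J M N P := by
  calc aC n K N P
      = #{w | w ∈ XD n K N ∧ K.image (act n w⁻¹) ∩ N = P} := by
        rw [aC]
        congr 1
        ext w
        simp
    _ = ∑ u ∈ XP n J,
          if u ∈ XD n K J then aCrel n J (K.image (act n u⁻¹) ∩ J) N P else 0 := by
        rw [card_filter_eq_sum_card_filter_mul hJ]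
        exact sum_congr rfl fun u hu => card_filter_mul_eq_ite hK hJ hNJ hu P
    _ = ∑ u ∈ XD n K J, aCrel n J (K.image (act n u⁻¹) ∩ J) N P := by
        rw [sum_ite_mem, inter_eq_right.mpr fun u hu => (mem_XD.mp hu).2]
    _ = ∑ M ∈ J.powerset, aC n K J M * aCrel n J M N P := by
        rw [← sum_fiberwise_of_maps_to' (g := fun u => K.image (act n u⁻¹) ∩ J)
          (fun u _ => mem_powerset.mpr inter_subset_right) (fun M => aCrel n J M N P)]
        simp [aC]

/-- the structure constants satisfy
`a_{KNP} = Σ_{M ⊆ J} a_{KJM} · a^J_{MNP}` for `K ⊆ Π` and `P ⊆ N ⊆ J ⊆ Π`. -/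
theorem structure_constants_identity (n : ℕ) (hn : 1 ≤ n) (K N J P : Finset (RootA n))
    (hK : K ⊆ PiA n) (hPN : P ⊆ N) (hNJ : N ⊆ J) (hJ : J ⊆ PiA n) :
    aC n K N P = ∑ M ∈ J.powerset, aC n K J M * aCrel n J M N P :=
  structure_constants_identity_general n K N J P hK hNJ hJ
end
end

section
/- For all J, K ⊆ Π, in the rational group algebra ℚ[W] one has Solomon's multiplication rule x_J · x_K = Σ_{L ⊆ K} a_{JKL} · x_L. -/
open scoped Classical

noncomputable section

/-!
In type `A` the parabolic subgroup `W_J` consists of permutations preserving the `J`-blocks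
(the maximal intervals of `Fin (n + 1)` linked by roots of `J`), and `X_J` of the permutations
increasing on every block. Each coset `g W_J` contains exactly one element of `X_J`: a
representative maximising `∑ a, a * d a` has no inversion inside a block, and a block-preserving
`u` with `d` and `d u` both increasing on blocks is increasing, hence trivial.

Writing `e ∈ X_K` as `e = v w` with `v ∈ W_J` and `w⁻¹ ∈ X_J` gives `w ∈ X_{JK}`, and
`(d, e) ↦ (w, d e)` is a bijection from `X_J × X_K` onto the pairs `(w, h)` with `w ∈ X_{JK}`
and `h ∈ X_{w⁻¹(J) ∩ K}`. Summing over it gives `x_J x_K = ∑_{w ∈ X_{JK}} x_{w⁻¹(J) ∩ K}`, which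
is the multiplication rule after grouping the `w` by `L = w⁻¹(J) ∩ K`.
-/

theorem Equiv.Perm.eq_one_of_strictMono {α : Type*} [LinearOrder α] [WellFoundedLT α]
    {u : Equiv.Perm α} (hu : StrictMono u) : u = 1 :=
  Equiv.ext fun a => DFunLike.congr_fun
    (Subsingleton.elim (hu.orderIsoOfSurjective u u.surjective) (OrderIso.refl α)) a

namespace Solomon

variable {n : ℕ} {J K : Finset (RootA n)}

lemma mem_XP_iff {w : WA n} : w ∈ XP n J ↔ ∀ p ∈ J, w p.1 < w p.2 := by
  simp [XP, IsPos, act]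

lemma mem_XD_iff {w : WA n} : w ∈ XD n J K ↔ w⁻¹ ∈ XP n J ∧ w ∈ XP n K := by
  simp [XD]

lemma mem_PiA_iff {p : RootA n} : p ∈ PiA n ↔ ∃ i : Fin n, p = (i.castSucc, i.succ) := by
  simp [PiA, eq_comm]

lemma isPos_of_mem_PiA {p : RootA n} (hp : p ∈ PiA n) : IsPos n p := by
  obtain ⟨i, rfl⟩ := mem_PiA_iff.mp hp
  exact Fin.castSucc_lt_succ

/-- Numbers the `J`-blocks from left to right. -/
def blockIdx (J : Finset (RootA n)) (a : Fin (n + 1)) : ℕ :=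
  (Finset.univ.filter fun i : Fin n => i.castSucc < a ∧ (i.castSucc, i.succ) ∉ J).card

lemma blockIdx_mono : Monotone (blockIdx J) := fun _ _ hab =>
  Finset.card_le_card fun i hi => by
    simp only [Finset.mem_filter, Finset.mem_univ, true_and] at hi ⊢
    exact ⟨hi.1.trans_le hab, hi.2⟩

lemma mem_iff_blockIdx_eq (i : Fin n) :
    ((i.castSucc, i.succ) : RootA n) ∈ J ↔ blockIdx J i.castSucc = blockIdx J i.succ := by
  constructor
  · intro hi
    refine congrArg Finset.card (Finset.filter_congr fun j _ => ?_)
    refine and_congr_left fun hj => ⟨fun h => h.trans Fin.castSucc_lt_succ, fun h => ?_⟩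
    rcases (Fin.castSucc_lt_succ_iff.mp h).lt_or_eq with h | rfl
    · exact Fin.castSucc_lt_castSucc_iff.mpr h
    · exact absurd hi hj
  · intro h
    by_contra hi
    refine h.not_lt (Finset.card_lt_card ((Finset.ssubset_iff_of_subset ?_).mpr ⟨i, ?_, ?_⟩))
    · intro j hj
      simp only [Finset.mem_filter, Finset.mem_univ, true_and] at hj ⊢
      exact ⟨hj.1.trans Fin.castSucc_lt_succ, hj.2⟩
    · simp only [Finset.mem_filter, Finset.mem_univ, true_and]
      exact ⟨Fin.castSucc_lt_succ, hi⟩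
    · simp

lemma blockIdx_fst_eq_snd (hJ : J ⊆ PiA n) {p : RootA n} (hp : p ∈ J) :
    blockIdx J p.1 = blockIdx J p.2 := by
  obtain ⟨i, rfl⟩ := mem_PiA_iff.mp (hJ hp)
  exact (mem_iff_blockIdx_eq i).mp hp

lemma blockIdx_apply_of_mem_WP (hJ : J ⊆ PiA n) {u : WA n} (hu : u ∈ WP n J) (a : Fin (n + 1)) :
    blockIdx J (u a) = blockIdx J a := by
  induction hu using Subgroup.closure_induction generalizing a with
  | mem _ hs =>
    obtain ⟨p, hp, rfl⟩ := hs
    have := blockIdx_fst_eq_snd hJ hp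
    rw [Equiv.swap_apply_def]
    split_ifs with h₁ h₂
    · rw [h₁, this]
    · rw [h₂, this]
    · rfl
  | one => rfl
  | mul u v _ _ hu hv => rw [Equiv.Perm.mul_apply, hu, hv]
  | inv u _ hu => simpa using (hu (u⁻¹ a)).symm

lemma apply_lt_apply_iff_of_mem_WP (hJ : J ⊆ PiA n) {u : WA n} (hu : u ∈ WP n J)
    {a b : Fin (n + 1)} (hab : blockIdx J a ≠ blockIdx J b) : u a < u b ↔ a < b := by
  have hmono := blockIdx_mono (J := J)
  rcases hab.lt_or_gt with h | h
  · refine iff_of_true (hmono.reflect_lt ?_) (hmono.reflect_lt h)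
    rwa [blockIdx_apply_of_mem_WP hJ hu, blockIdx_apply_of_mem_WP hJ hu]
  · refine iff_of_false (lt_asymm (hmono.reflect_lt ?_)) (lt_asymm (hmono.reflect_lt h))
    rwa [blockIdx_apply_of_mem_WP hJ hu, blockIdx_apply_of_mem_WP hJ hu]

lemma strictMonoOn_of_mem_XP {d : WA n} (hd : d ∈ XP n J) (c : ℕ) :
    StrictMonoOn d {a | blockIdx J a = c} := by
  refine strictMonoOn_of_lt_succ (Set.ordConnected_singleton.preimage_mono blockIdx_mono)
    fun a ha ha' hsa => ?_
  obtain ⟨i, rfl⟩ := Fin.exists_castSucc_eq.mpr fun h : a = Fin.last n => ha (h ▸ isMax_top)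
  rw [Fin.orderSucc_castSucc] at hsa ⊢
  exact mem_XP_iff.mp hd _ ((mem_iff_blockIdx_eq i).mpr (ha'.trans hsa.symm))

lemma mem_of_mem_XP_of_blockIdx_eq {d : WA n} (hd : d ∈ XP n J) {a b : Fin (n + 1)}
    (hab : blockIdx J a = blockIdx J b) (hp : (d a, d b) ∈ PiA n) : (a, b) ∈ J := by
  obtain ⟨i, hi⟩ := mem_PiA_iff.mp hp
  simp only [Prod.mk.injEq] at hi
  have hmono := strictMonoOn_of_mem_XP hd (blockIdx J a)
  have hlt : a < b := (hmono.lt_iff_lt rfl hab.symm).mp <| by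
    rw [hi.1, hi.2]
    exact Fin.castSucc_lt_succ
  -- an element strictly between `a` and `b` would lie in their block, and `d` would send it
  -- strictly between `castSucc i` and `succ i`
  have hb : b.val = a.val + 1 := by
    by_contra hne
    set c : Fin (n + 1) := ⟨a.val + 1, by omega⟩
    have hac : a < c := Fin.lt_def.mpr (by simp [c])
    have hcb : c < b := Fin.lt_def.mpr (by simp only [c]; omega)
    have hc : blockIdx J c = blockIdx J a :=
      le_antisymm (hab ▸ blockIdx_mono hcb.le) (blockIdx_mono hac.le)
    have h₁ := Fin.lt_def.mp (hmono rfl hc hac)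
    have h₂ := Fin.lt_def.mp (hmono hc hab.symm hcb)
    rw [hi.1] at h₁
    rw [hi.2] at h₂
    simp only [Fin.val_castSucc, Fin.val_succ] at h₁ h₂
    omega
  obtain ⟨j, rfl, rfl⟩ : ∃ j : Fin n, a = j.castSucc ∧ b = j.succ :=
    ⟨⟨a.val, by omega⟩, rfl, Fin.ext (by simp [hb])⟩
  exact (mem_iff_blockIdx_eq j).mpr hab

lemma eq_of_inv_mul_mem_WP (hJ : J ⊆ PiA n) {d₁ d₂ : WA n} (h₁ : d₁ ∈ XP n J) (h₂ : d₂ ∈ XP n J)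
    (hu : d₁⁻¹ * d₂ ∈ WP n J) : d₁ = d₂ := by
  suffices StrictMono (d₁⁻¹ * d₂) from inv_mul_eq_one.mp (Equiv.Perm.eq_one_of_strictMono this)
  intro a b hab
  by_cases hs : blockIdx J a = blockIdx J b
  · have hua := blockIdx_apply_of_mem_WP hJ hu a
    have hub := blockIdx_apply_of_mem_WP hJ hu b
    refine ((strictMonoOn_of_mem_XP h₁ (blockIdx J a)).lt_iff_lt hua (hub.trans hs.symm)).mp ?_
    simpa using strictMonoOn_of_mem_XP h₂ (blockIdx J a) rfl hs.symm hab
  · exact (apply_lt_apply_iff_of_mem_WP hJ hu hs).mpr hab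

def potential (d : WA n) : ℤ := ∑ a, (a.val : ℤ) * (d a).val

lemma potential_lt_mul_swap {d : WA n} {a b : Fin (n + 1)} (hab : a < b) (hd : d b < d a) :
    potential d < potential (d * Equiv.swap a b) := by
  have hswap :
      potential (d * Equiv.swap a b) = ∑ x, ((Equiv.swap a b x).val : ℤ) * (d x).val := by
    rw [potential, ← Equiv.sum_comp (Equiv.swap a b)]
    simp
  have hdiff : potential (d * Equiv.swap a b) - potential d
      = ((b.val : ℤ) - a.val) * ((d a).val - (d b).val) := by
    rw [hswap, potential, ← Finset.sum_sub_distrib,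
      Fintype.sum_eq_add a b hab.ne fun x hx => by simp [Equiv.swap_apply_of_ne_of_ne hx.1 hx.2]]
    simp only [Equiv.swap_apply_left, Equiv.swap_apply_right]
    ring
  have : (0 : ℤ) < ((b.val : ℤ) - a.val) * ((d a).val - (d b).val) :=
    mul_pos (sub_pos.mpr (mod_cast hab)) (sub_pos.mpr (mod_cast hd))
  linarith

/-- A coset representative of maximal `potential` has no inversion on a root of `J`. -/
lemma exists_mem_XP_inv_mul_mem_WP (hJ : ∀ p ∈ J, IsPos n p) (g : WA n) :
    ∃ d ∈ XP n J, g⁻¹ * d ∈ WP n J := by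
  obtain ⟨d, hd, hmax⟩ := (Finset.univ.filter fun d => g⁻¹ * d ∈ WP n J).exists_max_image
    potential ⟨g, by simp [one_mem]⟩
  simp only [Finset.mem_filter, Finset.mem_univ, true_and] at hd hmax
  refine ⟨d, mem_XP_iff.mpr fun p hp => ?_, hd⟩
  have hpos : p.1 < p.2 := hJ p hp
  by_contra hinv
  have hswap : g⁻¹ * (d * Equiv.swap p.1 p.2) ∈ WP n J := by
    rw [← mul_assoc]
    exact mul_mem hd (Subgroup.subset_closure ⟨p, hp, rfl⟩)
  exact (hmax _ hswap).not_gt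
    (potential_lt_mul_swap hpos ((not_lt.mp hinv).lt_of_ne (d.injective.ne hpos.ne')))

/-- The element of `X_J` in the coset `g W_J`. -/
def minRep (J : Finset (RootA n)) (g : WA n) : WA n :=
  Classical.epsilon fun d => d ∈ XP n J ∧ g⁻¹ * d ∈ WP n J

lemma minRep_spec (hJ : J ⊆ PiA n) (g : WA n) :
    minRep J g ∈ XP n J ∧ g⁻¹ * minRep J g ∈ WP n J :=
  Classical.epsilon_spec
    (exists_mem_XP_inv_mul_mem_WP (fun _ hp => isPos_of_mem_PiA (hJ hp)) g)

lemma minRep_eq (hJ : J ⊆ PiA n) {g d : WA n} (hd : d ∈ XP n J) (hg : g⁻¹ * d ∈ WP n J) :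
    minRep J g = d := by
  obtain ⟨hm, hmg⟩ := minRep_spec hJ g
  refine eq_of_inv_mul_mem_WP hJ hm hd ?_
  simpa [mul_assoc] using mul_mem (inv_mem hmg) hg

def lSet (J K : Finset (RootA n)) (w : WA n) : Finset (RootA n) :=
  J.image (act n w⁻¹) ∩ K

lemma mem_XP_of_mul_inv_mem_WP (hJ : J ⊆ PiA n) (hK : ∀ p ∈ K, IsPos n p) {w e : WA n}
    (hw : w⁻¹ ∈ XP n J) (he : e ∈ XP n K) (hv : e * w⁻¹ ∈ WP n J) : w ∈ XP n K := by
  refine mem_XP_iff.mpr fun p hp => ?_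
  have hlt : (e * w⁻¹) (w p.1) < (e * w⁻¹) (w p.2) := by simpa using mem_XP_iff.mp he p hp
  by_cases hs : blockIdx J (w p.1) = blockIdx J (w p.2)
  · refine ((strictMonoOn_of_mem_XP hw _).lt_iff_lt rfl hs.symm).mp ?_
    simpa [IsPos] using hK p hp
  · exact (apply_lt_apply_iff_of_mem_WP hJ hv hs).mp hlt

lemma mem_XP_iff_mul_mem_XP_lSet (hJ : J ⊆ PiA n) (hK : K ⊆ PiA n) {w d e : WA n}
    (hw : w ∈ XD n J K) (hd : d ∈ XP n J) (hv : e * w⁻¹ ∈ WP n J) :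
    e ∈ XP n K ↔ d * e ∈ XP n (lSet J K w) := by
  obtain ⟨hwJ, hwK⟩ := mem_XD_iff.mp hw
  have hblock : ∀ x, blockIdx J (e x) = blockIdx J (w x) := fun x => by
    simpa using blockIdx_apply_of_mem_WP hJ hv (w x)
  have hmem_lSet : ∀ p ∈ K, (w p.1, w p.2) ∈ J → p ∈ lSet J K w := fun p hp hq =>
    Finset.mem_inter.mpr ⟨Finset.mem_image.mpr ⟨_, hq, by simp [act]⟩, hp⟩
  have hsame : ∀ p ∈ lSet J K w, blockIdx J (e p.1) = blockIdx J (e p.2) := by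
    intro p hp
    obtain ⟨hpJ, -⟩ := Finset.mem_inter.mp hp
    obtain ⟨q, hq, rfl⟩ := Finset.mem_image.mp hpJ
    simpa [hblock, act] using blockIdx_fst_eq_snd hJ hq
  constructor
  · refine fun he => mem_XP_iff.mpr fun p hp => ?_
    exact strictMonoOn_of_mem_XP hd _ rfl (hsame p hp).symm
      (mem_XP_iff.mp he p (Finset.mem_inter.mp hp).2)
  · refine fun hde => mem_XP_iff.mpr fun p hp => ?_
    by_cases hpL : p ∈ lSet J K w
    · exact ((strictMonoOn_of_mem_XP hd _).lt_iff_lt rfl (hsame p hpL).symm).mp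
        (mem_XP_iff.mp hde p hpL)
    · -- `w p` is not a root of `J`, hence joins two different `J`-blocks, whose order `e w⁻¹`
      -- cannot change
      have hs : blockIdx J (w p.1) ≠ blockIdx J (w p.2) := fun hs =>
        hpL (hmem_lSet p hp (mem_of_mem_XP_of_blockIdx_eq hwJ hs (by simpa using hK hp)))
      simpa using (apply_lt_apply_iff_of_mem_WP hJ hv hs).mpr (mem_XP_iff.mp hwK p hp)

lemma sum_XP_prod_XP_eq_sum_sigma {M : Type*} [AddCommMonoid M] (hJ : J ⊆ PiA n)
    (hK : K ⊆ PiA n) (f : WA n → M) :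
    ∑ x ∈ XP n J ×ˢ XP n K, f (x.1 * x.2)
      = ∑ x ∈ (XD n J K).sigma fun w => XP n (lSet J K w), f x.2 := by
  refine Finset.sum_nbij' (fun x => ⟨(minRep J x.2⁻¹)⁻¹, x.1 * x.2⟩)
    (fun y => (minRep J (y.2 * y.1⁻¹), (minRep J (y.2 * y.1⁻¹))⁻¹ * y.2)) ?_ ?_ ?_ ?_
    (fun _ _ => rfl)
  · rintro ⟨d, e⟩ hde
    obtain ⟨hd, he⟩ := Finset.mem_product.mp hde
    obtain ⟨hm, hv⟩ := minRep_spec hJ e⁻¹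
    rw [← inv_inv (minRep J e⁻¹)] at hm
    rw [inv_inv, ← inv_inv (minRep J e⁻¹)] at hv
    have hw := mem_XD_iff.mpr ⟨hm, mem_XP_of_mul_inv_mem_WP hJ
      (fun _ hp => isPos_of_mem_PiA (hK hp)) hm he hv⟩
    exact Finset.mem_sigma.mpr ⟨hw, (mem_XP_iff_mul_mem_XP_lSet hJ hK hw hd hv).mp he⟩
  · rintro ⟨w, h⟩ hwh
    obtain ⟨hw, hh⟩ := Finset.mem_sigma.mp hwh
    obtain ⟨hm, hv⟩ := minRep_spec hJ (h * w⁻¹)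
    refine Finset.mem_product.mpr ⟨hm, (mem_XP_iff_mul_mem_XP_lSet hJ hK hw hm ?_).mpr ?_⟩
    · simpa [mul_assoc] using inv_mem hv
    · simpa using hh
  · rintro ⟨d, e⟩ hde
    obtain ⟨hd, -⟩ := Finset.mem_product.mp hde
    have hv := (minRep_spec hJ e⁻¹).2
    have hrep : minRep J (d * e * minRep J e⁻¹) = d :=
      minRep_eq hJ hd (by simpa [mul_assoc] using inv_mem hv)
    simp [hrep]
  · rintro ⟨w, h⟩ hwh
    obtain ⟨hw, -⟩ := Finset.mem_sigma.mp hwh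
    have hv := (minRep_spec hJ (h * w⁻¹)).2
    have hrep : minRep J (h⁻¹ * minRep J (h * w⁻¹)) = w⁻¹ :=
      minRep_eq hJ (mem_XD_iff.mp hw).1 (by simpa [mul_assoc] using inv_mem hv)
    simp [hrep]

lemma xA_mul_xA (J K : Finset (RootA n)) :
    xA n J * xA n K = ∑ x ∈ XP n J ×ˢ XP n K, MonoidAlgebra.of ℚ (WA n) (x.1 * x.2) := by
  simp only [xA, Finset.sum_mul_sum, Finset.sum_product, map_mul]

lemma sum_aC_smul_xA (J K : Finset (RootA n)) :
    ∑ L ∈ K.powerset, (aC n J K L : ℚ) • xA n L = ∑ w ∈ XD n J K, xA n (lSet J K w) := by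
  rw [← Finset.sum_fiberwise_of_maps_to (t := K.powerset) (g := lSet J K)
    fun w _ => Finset.mem_powerset.mpr Finset.inter_subset_right]
  refine Finset.sum_congr rfl fun L _ => ?_
  rw [Finset.sum_congr rfl fun w hw => congrArg (xA n) (Finset.mem_filter.mp hw).2,
    Finset.sum_const, Nat.cast_smul_eq_nsmul]
  rfl

end Solomon

open Solomon in
theorem solomon_rule_general (n : ℕ) (J K : Finset (RootA n))
    (hJ : J ⊆ PiA n) (hK : K ⊆ PiA n) :
    xA n J * xA n K = ∑ L ∈ K.powerset, (aC n J K L : ℚ) • xA n L := by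
  rw [xA_mul_xA, sum_XP_prod_XP_eq_sum_sigma hJ hK, Finset.sum_sigma, sum_aC_smul_xA]
  rfl

/-- Solomon's multiplication rule: for all `J, K ⊆ Π`, in `ℚ[W]` one has
`x_J · x_K = Σ_{L ⊆ K} a_{JKL} · x_L`. -/
theorem solomon_rule (n : ℕ) (hn : 1 ≤ n) (J K : Finset (RootA n))
    (hJ : J ⊆ PiA n) (hK : K ⊆ PiA n) :
    xA n J * xA n K = ∑ L ∈ K.powerset, (aC n J K L : ℚ) • xA n L :=
  solomon_rule_general n J K hJ hK
end
end

section
/- Let M, N ⊆ J ⊆ Π. Then in the rational group algebra ℚ[W] one has the relative Solomon multiplication rule inside W_J: x_M^J · x_N^J = Σ_{P ⊆ N} a^J_{MNP} · x_P^J. -/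
open scoped Classical

noncomputable section

/-!
Write `W = S_{n+1}` and encode `S ⊆ Π` by the positions `D_S` of its simple roots. Then `X_S`
consists of the permutations with an ascent at every position of `D_S`, and `W_J` is the Young
subgroup of the composition of `{0, …, n}` whose blocks are glued along `D_J`. After expanding
both sides, the rule is the bijection `(u, v) ↦ (d, u v)` from `X^J_M × X^J_N` onto the pairs
`(d, e)` with `d ∈ X_{MN} ∩ W_J` and `e ∈ X^J_{d⁻¹(M) ∩ N}`, where `d` is the distinguished
representative of `W_M v`. Both `d` and the inverse `(d, e) ↦ v` are instances of one
construction `blockRank D w σ`, the element of `W_D w` ordering each fiber of `w` like `σ`, and its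
uniqueness (`blockRank_eq`) gives both inverse identities.
-/

namespace RelativeSolomon

open Finset Equiv

variable {m : ℕ}

/-- Permutations of `Fin m` act on `ℕ`, fixing every `k ≥ m`, so that positions `k + 1` need no
bound proofs. -/
abbrev natPerm : Perm (Fin m) →* Perm ℕ := Perm.extendDomainHom Fin.equivSubtype

lemma natPerm_apply_of_lt (w : Perm (Fin m)) {k : ℕ} (hk : k < m) :
    natPerm w k = w ⟨k, hk⟩ :=
  (Perm.extendDomain_apply_subtype w Fin.equivSubtype hk).trans rfl

lemma natPerm_apply_of_le (w : Perm (Fin m)) {k : ℕ} (hk : m ≤ k) : natPerm w k = k :=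
  Perm.extendDomain_apply_not_subtype _ _ (not_lt.2 hk)

lemma natPerm_apply_val (w : Perm (Fin m)) (i : Fin m) : natPerm w i = w i :=
  natPerm_apply_of_lt w i.2

lemma natPerm_apply_lt (w : Perm (Fin m)) {k : ℕ} (hk : k < m) : natPerm w k < m := by
  rw [natPerm_apply_of_lt w hk]; exact Fin.is_lt _

lemma natPerm_mul_apply (u v : Perm (Fin m)) (k : ℕ) :
    natPerm (u * v) k = natPerm u (natPerm v k) := by
  rw [map_mul, Perm.mul_apply]

lemma natPerm_inv_apply_self (w : Perm (Fin m)) (k : ℕ) : natPerm w⁻¹ (natPerm w k) = k := by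
  rw [← Perm.mul_apply, ← map_mul, inv_mul_cancel, map_one, Perm.one_apply]

lemma natPerm_apply_inv_self (w : Perm (Fin m)) (k : ℕ) : natPerm w (natPerm w⁻¹ k) = k := by
  rw [← Perm.mul_apply, ← map_mul, mul_inv_cancel, map_one, Perm.one_apply]

lemma natPerm_ext {w w' : Perm (Fin m)} (h : ∀ k < m, natPerm w k = natPerm w' k) : w = w' := by
  ext i
  rw [← natPerm_apply_val, ← natPerm_apply_val, h i i.2]

/-- `x` and `y` lie in the same block of the composition of `ℕ` whose block-internal gaps
`k ↦ k + 1` are the elements of `D`. -/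
def SameBlock (D : Finset ℕ) (x y : ℕ) : Prop :=
  ∀ k, (x ≤ k ∧ k < y) ∨ (y ≤ k ∧ k < x) → k ∈ D

namespace SameBlock

variable {D : Finset ℕ} {x y z : ℕ}

@[refl] lemma refl (D : Finset ℕ) (x : ℕ) : SameBlock D x x := fun _ hk => by omega

@[symm] lemma symm (h : SameBlock D x y) : SameBlock D y x := fun k hk => h k hk.symm

@[trans] lemma trans (h₁ : SameBlock D x y) (h₂ : SameBlock D y z) : SameBlock D x z := by
  intro k hk
  by_cases hy : k < y
  · rcases hk with hk | hk
    · exact h₁ k (Or.inl ⟨hk.1, hy⟩)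
    · exact h₂ k (Or.inr ⟨hk.1, hy⟩)
  · rcases hk with hk | hk
    · exact h₂ k (Or.inl ⟨not_lt.1 hy, hk.2⟩)
    · exact h₁ k (Or.inr ⟨not_lt.1 hy, hk.2⟩)

lemma mono {D' : Finset ℕ} (hD : D ⊆ D') (h : SameBlock D x y) : SameBlock D' x y :=
  fun k hk => hD (h k hk)

lemma of_mem (h : x ∈ D) : SameBlock D x (x + 1) := fun k hk => by
  obtain rfl : k = x := by omega
  exact h

lemma mem (h : SameBlock D x (x + 1)) : x ∈ D := h x (Or.inl ⟨le_rfl, x.lt_succ_self⟩)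

lemma left_of_le (h : SameBlock D x z) (hxy : x ≤ y) (hyz : y ≤ z) : SameBlock D x y :=
  fun k hk => h k (by omega)

lemma right_of_le (h : SameBlock D x z) (hxy : x ≤ y) (hyz : y ≤ z) : SameBlock D y z :=
  fun k hk => h k (by omega)

end SameBlock

section Blocks

variable (D : Finset ℕ)

def blockStart (x : ℕ) : ℕ :=
  ((range (x + 1)).filter fun y => y = 0 ∨ y - 1 ∉ D).max' ⟨0, by simp⟩

lemma blockStart_spec (x : ℕ) :
    blockStart D x ≤ x ∧ (blockStart D x = 0 ∨ blockStart D x - 1 ∉ D) := by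
  have := max'_mem ((range (x + 1)).filter fun y => y = 0 ∨ y - 1 ∉ D) ⟨0, by simp⟩
  rw [mem_filter, mem_range, Nat.lt_succ_iff] at this
  exact this

lemma blockStart_le (x : ℕ) : blockStart D x ≤ x := (blockStart_spec D x).1

variable {D}

lemma le_blockStart {x b : ℕ} (hb : b ≤ x) (hbD : b = 0 ∨ b - 1 ∉ D) : b ≤ blockStart D x :=
  le_max' _ b (mem_filter.2 ⟨mem_range.2 (by omega), hbD⟩)

lemma sameBlock_blockStart (x : ℕ) : SameBlock D (blockStart D x) x := by
  intro k hk
  have hle := blockStart_le D x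
  by_contra hkD
  have : k + 1 ≤ blockStart D x := le_blockStart (by omega) (Or.inr (by simpa using hkD))
  omega

lemma blockStart_eq_of_sameBlock {x y : ℕ} (h : SameBlock D x y) :
    blockStart D x = blockStart D y := by
  wlog hxy : x ≤ y generalizing x y
  · exact (this h.symm (by omega)).symm
  have hbd := blockStart_spec D y
  refine le_antisymm (le_blockStart (by have := blockStart_le D x; omega)
    (blockStart_spec D x).2) (le_blockStart ?_ hbd.2)
  by_contra hlt
  rcases hbd.2 with h0 | hD
  · omega
  · exact hD (h _ (Or.inl ⟨by omega, by omega⟩))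

lemma blockStart_eq_iff {x y : ℕ} : blockStart D x = blockStart D y ↔ SameBlock D x y :=
  ⟨fun h => (h ▸ sameBlock_blockStart x).symm.trans (sameBlock_blockStart y),
    blockStart_eq_of_sameBlock⟩

variable (D) in
/-- The last element of the block of `x`, truncated to `range m`. -/
def blockEnd (m x : ℕ) : ℕ :=
  if h : ((range m).filter fun y => SameBlock D x y).Nonempty then
    ((range m).filter fun y => SameBlock D x y).max' h
  else x

lemma blockEnd_spec {x : ℕ} (hx : x < m) :
    blockEnd D m x < m ∧ SameBlock D x (blockEnd D m x) ∧ x ≤ blockEnd D m x := by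
  have hx' : x ∈ (range m).filter fun y => SameBlock D x y :=
    mem_filter.2 ⟨mem_range.2 hx, SameBlock.refl D x⟩
  have hmem := max'_mem _ ⟨x, hx'⟩
  rw [mem_filter, mem_range] at hmem
  rw [blockEnd, dif_pos ⟨x, hx'⟩]
  exact ⟨hmem.1, hmem.2, le_max' _ x hx'⟩

lemma le_blockEnd {x y : ℕ} (hy : y < m) (h : SameBlock D x y) : y ≤ blockEnd D m x := by
  have hy' : y ∈ (range m).filter fun y => SameBlock D x y := mem_filter.2 ⟨mem_range.2 hy, h⟩
  rw [blockEnd, dif_pos ⟨y, hy'⟩]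
  exact le_max' _ y hy'

lemma filter_blockStart_eq {x : ℕ} (hx : x < m) :
    (range m).filter (fun y => blockStart D y = blockStart D x) =
      Icc (blockStart D x) (blockEnd D m x) := by
  obtain ⟨hend, hxend, hxle⟩ := blockEnd_spec (D := D) hx
  ext y
  simp only [mem_filter, mem_range, mem_Icc, blockStart_eq_iff]
  constructor
  · rintro ⟨hy, hyx⟩
    exact ⟨blockStart_eq_of_sameBlock hyx.symm ▸ blockStart_le D y, le_blockEnd hy hyx.symm⟩
  · rintro ⟨h₁, h₂⟩
    refine ⟨by omega, ?_⟩
    rcases le_or_gt y x with hyx | hyx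
    · exact (sameBlock_blockStart x).right_of_le h₁ hyx
    · exact (hxend.left_of_le hyx.le h₂).symm

lemma card_filter_blockStart_eq {x : ℕ} (hx : x < m) :
    ((range m).filter fun y => blockStart D y = blockStart D x).card =
      blockEnd D m x + 1 - blockStart D x := by
  rw [filter_blockStart_eq hx, Nat.card_Icc]

lemma card_filter_blockStart_eq_lt {x : ℕ} (hx : x < m) :
    ((range m).filter fun y => blockStart D y = blockStart D x ∧ y < x).card =
      x - blockStart D x := by
  rw [← filter_filter, filter_blockStart_eq hx, ← Nat.card_Ico]
  congr 1
  ext y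
  simp only [mem_filter, mem_Icc, mem_Ico]
  have := (blockEnd_spec (D := D) hx).2.2
  omega

lemma blockEnd_lt_blockStart {x y : ℕ} (hx : x < m) (hxy : x < y) (h : ¬SameBlock D x y) :
    blockEnd D m x < blockStart D y := by
  obtain ⟨k, hxk, hky, hkD⟩ : ∃ k, x ≤ k ∧ k < y ∧ k ∉ D := by
    simp only [SameBlock, not_forall, exists_prop] at h
    obtain ⟨k, hk, hkD⟩ := h
    exact ⟨k, by omega, by omega, hkD⟩
  have hend : blockEnd D m x ≤ k := by
    by_contra hlt
    exact hkD ((blockEnd_spec hx).2.1 k (Or.inl ⟨hxk, by omega⟩))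
  have hstart : k + 1 ≤ blockStart D y := le_blockStart (by omega) (Or.inr (by simpa using hkD))
  omega

end Blocks

lemma card_filter_natPerm (w : Perm (Fin m)) (Q : ℕ → Prop) [DecidablePred Q] :
    ((range m).filter fun j => Q (natPerm w j)).card = ((range m).filter Q).card := by
  refine card_nbij' (natPerm w) (natPerm w⁻¹) ?_ ?_ (fun j _ => natPerm_inv_apply_self w j)
    (fun j _ => natPerm_apply_inv_self w j)
  · intro j hj
    simp only [coe_filter, mem_range, Set.mem_ofPred_eq] at hj ⊢
    exact ⟨natPerm_apply_lt w hj.1, hj.2⟩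
  · intro j hj
    simp only [coe_filter, mem_range, Set.mem_ofPred_eq, natPerm_apply_inv_self] at hj ⊢
    exact ⟨natPerm_apply_lt w⁻¹ hj.1, hj.2⟩

def youngSubgroup (D : Finset ℕ) : Subgroup (Perm (Fin m)) where
  carrier := {w | ∀ k, SameBlock D k (natPerm w k)}
  one_mem' k := by rw [map_one]; exact SameBlock.refl D k
  mul_mem' {u v} hu hv k := by rw [natPerm_mul_apply]; exact (hv k).trans (hu _)
  inv_mem' {w} hw k := by simpa only [natPerm_apply_inv_self] using (hw (natPerm w⁻¹ k)).symm

lemma swap_mem_youngSubgroup {D : Finset ℕ} {a b : Fin m} (hab : SameBlock D a b) :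
    swap a b ∈ youngSubgroup D := by
  intro k
  by_cases hk : k < m
  · rw [natPerm_apply_of_lt _ hk, swap_apply_def]
    split_ifs with ha hb
    · rw [← ha] at hab; exact hab
    · rw [← hb] at hab; exact hab.symm
    · exact .refl D k
  · rw [natPerm_apply_of_le _ (not_lt.1 hk)]

def AscentsOn (D : Finset ℕ) (w : Perm (Fin m)) : Prop :=
  ∀ k ∈ D, natPerm w k < natPerm w (k + 1)

namespace AscentsOn

variable {D : Finset ℕ} {w : Perm (Fin m)}

lemma lt_of_sameBlock (hw : AscentsOn D w) {a b : ℕ} (hab : SameBlock D a b) (hlt : a < b) :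
    natPerm w a < natPerm w b := by
  induction b, hlt using Nat.le_induction with
  | base => exact hw a hab.mem
  | succ b hab' ih =>
    have hb : b ∈ D := hab b (Or.inl ⟨by omega, b.lt_succ_self⟩)
    exact (ih (hab.left_of_le (by omega) b.le_succ)).trans (hw b hb)

lemma lt_iff_of_sameBlock (hw : AscentsOn D w) {a b : ℕ} (hab : SameBlock D a b) :
    natPerm w a < natPerm w b ↔ a < b := by
  refine ⟨fun h => ?_, hw.lt_of_sameBlock hab⟩
  by_contra hba
  rcases (not_lt.1 hba).lt_or_eq with hba | rfl
  · exact (hw.lt_of_sameBlock hab.symm hba).not_gt h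
  · exact h.false

end AscentsOn

section BlockRank

variable (D : Finset ℕ) (w σ : Perm (Fin m))

def fiber (j : ℕ) : Finset ℕ :=
  (range m).filter fun i => blockStart D (natPerm w i) = blockStart D (natPerm w j)

/-- Sends `j` into the block of `natPerm w j`; the fiber of `j` under `w` is mapped onto that
block in the order given by `σ`. -/
def blockRankNat (j : ℕ) : ℕ :=
  blockStart D (natPerm w j) + ((fiber D w j).filter fun i => natPerm σ i < natPerm σ j).card

variable {D w σ}

lemma mem_fiber {i j : ℕ} :
    i ∈ fiber D w j ↔ i < m ∧ blockStart D (natPerm w i) = blockStart D (natPerm w j) := by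
  rw [fiber, mem_filter, mem_range]

lemma card_fiber {j : ℕ} (hj : j < m) :
    (fiber D w j).card = blockEnd D m (natPerm w j) + 1 - blockStart D (natPerm w j) := by
  rw [fiber, card_filter_natPerm w (fun y => blockStart D y = blockStart D (natPerm w j)),
    card_filter_blockStart_eq (natPerm_apply_lt w hj)]

lemma blockRankNat_mem_Icc {j : ℕ} (hj : j < m) :
    blockRankNat D w σ j ∈ Icc (blockStart D (natPerm w j)) (blockEnd D m (natPerm w j)) := by
  have hlt :
      ((fiber D w j).filter fun i => natPerm σ i < natPerm σ j).card < (fiber D w j).card :=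
    card_lt_card (filter_ssubset.2 ⟨j, mem_fiber.2 ⟨hj, rfl⟩, lt_irrefl _⟩)
  have hstart := (blockEnd_spec (D := D) (natPerm_apply_lt w hj)).2.2
  have := blockStart_le D (natPerm w j)
  rw [card_fiber hj] at hlt
  rw [mem_Icc, blockRankNat]
  omega

lemma blockRankNat_lt (j : ℕ) (hj : j < m) : blockRankNat D w σ j < m := by
  have := blockRankNat_mem_Icc (D := D) (w := w) (σ := σ) hj
  rw [← filter_blockStart_eq (natPerm_apply_lt w hj), mem_filter, mem_range] at this
  exact this.1

lemma blockStart_blockRankNat {j : ℕ} (hj : j < m) :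
    blockStart D (blockRankNat D w σ j) = blockStart D (natPerm w j) := by
  have := blockRankNat_mem_Icc (D := D) (w := w) (σ := σ) hj
  rw [← filter_blockStart_eq (natPerm_apply_lt w hj), mem_filter] at this
  exact this.2

lemma blockRankNat_lt_blockRankNat {i j : ℕ} (hij : i ∈ fiber D w j)
    (hσ : natPerm σ i < natPerm σ j) : blockRankNat D w σ i < blockRankNat D w σ j := by
  have hfib : blockStart D (natPerm w i) = blockStart D (natPerm w j) := (mem_fiber.1 hij).2
  have hsub : insert i ((fiber D w i).filter fun k => natPerm σ k < natPerm σ i) ⊆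
      (fiber D w j).filter fun k => natPerm σ k < natPerm σ j := by
    intro k hk
    rcases mem_insert.1 hk with rfl | hk
    · exact mem_filter.2 ⟨hij, hσ⟩
    · rw [mem_filter, mem_fiber] at hk ⊢
      exact ⟨⟨hk.1.1, hk.1.2.trans hfib⟩, hk.2.trans hσ⟩
  have hcard := card_le_card hsub
  rw [card_insert_of_notMem (by simp)] at hcard
  rw [blockRankNat, blockRankNat, hfib]
  omega

lemma blockRankNat_inj {i j : ℕ} (hi : i < m) (hj : j < m)
    (h : blockRankNat D w σ i = blockRankNat D w σ j) : i = j := by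
  have hij : i ∈ fiber D w j := mem_fiber.2 ⟨hi, by
    rw [← blockStart_blockRankNat (σ := σ) hi, ← blockStart_blockRankNat (σ := σ) hj, h]⟩
  have hji : j ∈ fiber D w i := mem_fiber.2 ⟨hj, (mem_fiber.1 hij).2.symm⟩
  rcases lt_trichotomy (natPerm σ i) (natPerm σ j) with hσ | hσ | hσ
  · exact absurd h (blockRankNat_lt_blockRankNat hij hσ).ne
  · exact (natPerm σ).injective hσ
  · exact absurd h (blockRankNat_lt_blockRankNat hji hσ).ne'

variable (D w σ) in
def blockRank : Perm (Fin m) :=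
  Equiv.ofBijective (fun j => ⟨blockRankNat D w σ j, blockRankNat_lt j j.2⟩)
    (Finite.injective_iff_bijective.mp fun _ _ h =>
      Fin.ext (blockRankNat_inj (Fin.is_lt _) (Fin.is_lt _) (Fin.mk.inj h)))

lemma natPerm_blockRank {j : ℕ} (hj : j < m) :
    natPerm (blockRank D w σ) j = blockRankNat D w σ j := by
  rw [natPerm_apply_of_lt _ hj]; rfl

lemma blockRankNat_lt_iff {i j : ℕ} (hij : i ∈ fiber D w j) (hj : j < m) :
    blockRankNat D w σ i < blockRankNat D w σ j ↔ natPerm σ i < natPerm σ j := by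
  refine ⟨fun h => ?_, blockRankNat_lt_blockRankNat hij⟩
  have hji : j ∈ fiber D w i := mem_fiber.2 ⟨hj, (mem_fiber.1 hij).2.symm⟩
  rcases lt_trichotomy (natPerm σ i) (natPerm σ j) with hσ | hσ | hσ
  · exact hσ
  · rw [(natPerm σ).injective hσ] at h
    exact absurd h (lt_irrefl _)
  · exact absurd (blockRankNat_lt_blockRankNat hji hσ) h.asymm

lemma blockRankNat_lt_of_lt {i j : ℕ} (hi : i < m) (hj : j < m)
    (hw : natPerm w i < natPerm w j) (hσ : i ∈ fiber D w j → natPerm σ i < natPerm σ j) :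
    blockRankNat D w σ i < blockRankNat D w σ j := by
  by_cases hij : i ∈ fiber D w j
  · exact blockRankNat_lt_blockRankNat hij (hσ hij)
  · have hblock : ¬SameBlock D (natPerm w i) (natPerm w j) := fun h =>
      hij (mem_fiber.2 ⟨hi, blockStart_eq_of_sameBlock h⟩)
    have := blockEnd_lt_blockStart (natPerm_apply_lt w hi) hw hblock
    have := mem_Icc.1 (blockRankNat_mem_Icc (D := D) (w := w) (σ := σ) hi)
    have := mem_Icc.1 (blockRankNat_mem_Icc (D := D) (w := w) (σ := σ) hj)
    omega

lemma blockRank_eq {τ : Perm (Fin m)}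
    (hblock : ∀ j < m, blockStart D (natPerm τ j) = blockStart D (natPerm w j))
    (horder : ∀ j < m, ∀ i ∈ fiber D w j,
      (natPerm τ i < natPerm τ j ↔ natPerm σ i < natPerm σ j)) :
    blockRank D w σ = τ := by
  refine natPerm_ext fun t ht => ?_
  have hτt := natPerm_apply_lt τ ht
  have hfilter : ((fiber D w t).filter fun i => natPerm σ i < natPerm σ t) =
      (range m).filter fun i => blockStart D (natPerm τ i) = blockStart D (natPerm τ t) ∧
        natPerm τ i < natPerm τ t := by
    ext i
    simp only [mem_filter, mem_fiber, mem_range]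
    constructor
    · rintro ⟨⟨hi, hfib⟩, hσ⟩
      refine ⟨hi, by rw [hblock i hi, hblock t ht, hfib], ?_⟩
      exact (horder t ht i (mem_fiber.2 ⟨hi, hfib⟩)).2 hσ
    · rintro ⟨hi, hfib, hτ⟩
      have hfib' : blockStart D (natPerm w i) = blockStart D (natPerm w t) := by
        rw [← hblock i hi, ← hblock t ht, hfib]
      exact ⟨⟨hi, hfib'⟩, (horder t ht i (mem_fiber.2 ⟨hi, hfib'⟩)).1 hτ⟩
  have hcount := card_filter_natPerm τ
    (fun y => blockStart D y = blockStart D (natPerm τ t) ∧ y < natPerm τ t)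
  rw [card_filter_blockStart_eq_lt hτt] at hcount
  have := blockStart_le D (natPerm τ t)
  rw [natPerm_blockRank ht, blockRankNat, hfilter, hcount, ← hblock t ht]
  omega

lemma ascentsOn_mul_blockRank_inv (hD : ∀ k ∈ D, k + 1 < m) :
    AscentsOn D (σ * (blockRank D w σ)⁻¹) := by
  intro l hl
  set ρ := blockRank D w σ
  have hl₁ : l + 1 < m := hD l hl
  have hj₀ : natPerm ρ⁻¹ l < m := natPerm_apply_lt _ (by omega)
  have hj₁ : natPerm ρ⁻¹ (l + 1) < m := natPerm_apply_lt _ hl₁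
  have hrank : ∀ k < m, blockRankNat D w σ (natPerm ρ⁻¹ k) = k := fun k hk => by
    rw [← natPerm_blockRank (natPerm_apply_lt _ hk), natPerm_apply_inv_self]
  have hfib : natPerm ρ⁻¹ l ∈ fiber D w (natPerm ρ⁻¹ (l + 1)) := by
    refine mem_fiber.2 ⟨hj₀, ?_⟩
    rw [← blockStart_blockRankNat (σ := σ) hj₀, ← blockStart_blockRankNat (σ := σ) hj₁,
      hrank l (by omega), hrank (l + 1) hl₁]
    exact blockStart_eq_of_sameBlock (.of_mem hl)
  rw [natPerm_mul_apply, natPerm_mul_apply, ← blockRankNat_lt_iff hfib hj₁,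
    hrank l (by omega), hrank (l + 1) hl₁]
  exact l.lt_succ_self

lemma fiber_blockRank {j : ℕ} (hj : j < m) : fiber D (blockRank D w σ) j = fiber D w j := by
  ext i
  simp only [mem_fiber]
  constructor
  · rintro ⟨hi, h⟩
    rw [natPerm_blockRank hi, natPerm_blockRank hj, blockStart_blockRankNat hi,
      blockStart_blockRankNat hj] at h
    exact ⟨hi, h⟩
  · rintro ⟨hi, h⟩
    rw [natPerm_blockRank hi, natPerm_blockRank hj, blockStart_blockRankNat hi,
      blockStart_blockRankNat hj]
    exact ⟨hi, h⟩

lemma blockRank_mem_youngSubgroup {D' : Finset ℕ} (hD : D ⊆ D') (hw : w ∈ youngSubgroup D') :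
    blockRank D w σ ∈ youngSubgroup D' := by
  intro k
  by_cases hk : k < m
  · rw [natPerm_blockRank hk]
    exact (hw k).trans ((blockStart_eq_iff.1 (blockStart_blockRankNat hk).symm).mono hD)
  · rw [natPerm_apply_of_le _ (not_lt.1 hk)]

lemma ascentsOn_blockRank {D' : Finset ℕ} (hD' : ∀ k ∈ D', k + 1 < m) (hw : AscentsOn D' w)
    (hσ : ∀ k ∈ D', k ∈ fiber D w (k + 1) → natPerm σ k < natPerm σ (k + 1)) :
    AscentsOn D' (blockRank D w σ) := by
  intro k hk
  have hk₁ := hD' k hk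
  rw [natPerm_blockRank (by omega), natPerm_blockRank hk₁]
  exact blockRankNat_lt_of_lt (by omega) hk₁ (hw k hk) (hσ k hk)

end BlockRank

section Solomon

variable {DM DN : Finset ℕ}

/-- The positions of the simple roots in `d⁻¹(M) ∩ N`, where `DM`, `DN` are those of `M`, `N`. -/
def interPreimage (DM DN : Finset ℕ) (d : Perm (Fin m)) : Finset ℕ :=
  DN.filter fun k => natPerm d k ∈ DM ∧ natPerm d (k + 1) = natPerm d k + 1

/-- The distinguished representative of the coset `W_M v`. -/
abbrev minRep (DM : Finset ℕ) (v : Perm (Fin m)) : Perm (Fin m) := blockRank DM v 1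

lemma ascentsOn_minRep_inv (hDM : ∀ k ∈ DM, k + 1 < m) (v : Perm (Fin m)) :
    AscentsOn DM (minRep DM v)⁻¹ := by
  simpa only [one_mul] using ascentsOn_mul_blockRank_inv (w := v) (σ := 1) hDM

lemma ascentsOn_minRep (hDN : ∀ k ∈ DN, k + 1 < m) {v : Perm (Fin m)} (hv : AscentsOn DN v) :
    AscentsOn DN (minRep DM v) :=
  ascentsOn_blockRank hDN hv fun k _ _ => by simp only [map_one, Perm.one_apply, k.lt_succ_self]

lemma ascentsOn_interPreimage_mul (hDN : ∀ k ∈ DN, k + 1 < m) {u v : Perm (Fin m)}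
    (hu : AscentsOn DM u) (hv : AscentsOn DN v) :
    AscentsOn (interPreimage DM DN (minRep DM v)) (u * v) := by
  intro k hk
  obtain ⟨hkN, hkM, hsucc⟩ := mem_filter.1 hk
  have hk₁ := hDN k hkN
  have hblock : SameBlock DM (natPerm v k) (natPerm v (k + 1)) := by
    rw [← blockStart_eq_iff, ← blockStart_blockRankNat (σ := 1) (by omega),
      ← blockStart_blockRankNat (σ := 1) hk₁, ← natPerm_blockRank (by omega),
      ← natPerm_blockRank hk₁, hsucc]
    exact blockStart_eq_of_sameBlock (.of_mem hkM)
  rw [natPerm_mul_apply, natPerm_mul_apply]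
  exact hu.lt_of_sameBlock hblock (hv k hkN)

lemma natPerm_succ_of_sameBlock {d : Perm (Fin m)} (hdN : AscentsOn DN d)
    (hdM : AscentsOn DM d⁻¹) {k : ℕ} (hk : k ∈ DN)
    (hblock : SameBlock DM (natPerm d k) (natPerm d (k + 1))) :
    natPerm d (k + 1) = natPerm d k + 1 := by
  have hlt := hdN k hk
  by_contra hne
  have hmid : natPerm d⁻¹ (natPerm d k + 1) < natPerm d⁻¹ (natPerm d (k + 1)) :=
    hdM.lt_of_sameBlock (hblock.right_of_le (by omega) (by omega)) (by omega)
  have hfirst : natPerm d⁻¹ (natPerm d k) < natPerm d⁻¹ (natPerm d k + 1) :=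
    hdM _ (hblock.left_of_le (y := natPerm d k + 1) (by omega) (by omega)).mem
  rw [natPerm_inv_apply_self] at hmid hfirst
  omega

lemma ascentsOn_blockRank_of_interPreimage (hDN : ∀ k ∈ DN, k + 1 < m) {d e : Perm (Fin m)}
    (hdN : AscentsOn DN d) (hdM : AscentsOn DM d⁻¹) (he : AscentsOn (interPreimage DM DN d) e) :
    AscentsOn DN (blockRank DM d e) := by
  refine ascentsOn_blockRank hDN hdN fun k hk hfib => he k (mem_filter.2 ⟨hk, ?_⟩)
  have hblock := blockStart_eq_iff.1 (mem_fiber.1 hfib).2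
  have hsucc := natPerm_succ_of_sameBlock hdN hdM hk hblock
  rw [hsucc] at hblock
  exact ⟨hblock.mem, hsucc⟩

lemma blockRank_minRep {u : Perm (Fin m)} (hu : AscentsOn DM u) (v : Perm (Fin m)) :
    blockRank DM (minRep DM v) (u * v) = v := by
  refine blockRank_eq (fun j hj => ?_) fun j hj i hij => ?_
  · rw [natPerm_blockRank hj, blockStart_blockRankNat hj]
  · rw [fiber_blockRank hj, mem_fiber] at hij
    rw [natPerm_mul_apply, natPerm_mul_apply, hu.lt_iff_of_sameBlock (blockStart_eq_iff.1 hij.2)]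

lemma minRep_blockRank {d : Perm (Fin m)} (hd : AscentsOn DM d⁻¹) (e : Perm (Fin m)) :
    minRep DM (blockRank DM d e) = d := by
  refine blockRank_eq (fun j hj => ?_) fun j hj i hij => ?_
  · rw [natPerm_blockRank hj, blockStart_blockRankNat hj]
  · rw [fiber_blockRank hj, mem_fiber] at hij
    rw [map_one, Perm.one_apply, Perm.one_apply,
      ← hd.lt_iff_of_sameBlock (blockStart_eq_iff.1 hij.2), natPerm_inv_apply_self,
      natPerm_inv_apply_self]

end Solomon

section Roots

variable {n : ℕ}

/-- The (`0`-indexed) positions `k` of the simple roots `e_{k+1} - e_{k+2}` lying in `S`. -/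
def simpleIndices (n : ℕ) (S : Finset (RootA n)) : Finset ℕ :=
  (univ.filter fun k : Fin n => (k.castSucc, k.succ) ∈ S).image Fin.val

lemma mem_simpleIndices {S : Finset (RootA n)} {j : ℕ} :
    j ∈ simpleIndices n S ↔ ∃ k : Fin n, (k.castSucc, k.succ) ∈ S ∧ (k : ℕ) = j := by
  simp [simpleIndices]

lemma val_mem_simpleIndices {S : Finset (RootA n)} {k : Fin n} :
    (k : ℕ) ∈ simpleIndices n S ↔ (k.castSucc, k.succ) ∈ S := by
  rw [mem_simpleIndices]
  exact ⟨fun ⟨l, hl, hlk⟩ => Fin.ext hlk ▸ hl, fun h => ⟨k, h, rfl⟩⟩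

lemma simpleIndices_mono {S T : Finset (RootA n)} (h : S ⊆ T) :
    simpleIndices n S ⊆ simpleIndices n T :=
  image_subset_image (monotone_filter_right _ fun _ _ hk => h hk)

lemma succ_lt_of_mem_simpleIndices {S : Finset (RootA n)} :
    ∀ j ∈ simpleIndices n S, j + 1 < n + 1 := by
  intro j hj
  obtain ⟨k, -, rfl⟩ := mem_simpleIndices.1 hj
  exact Nat.succ_lt_succ k.2

lemma natPerm_castSucc (w : WA n) (k : Fin n) : natPerm w k = w k.castSucc :=
  natPerm_apply_val w k.castSucc

lemma natPerm_succ (w : WA n) (k : Fin n) : natPerm w (k + 1) = w k.succ :=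
  natPerm_apply_val w k.succ

lemma mem_XP_iff_ascentsOn {S : Finset (RootA n)} (hS : S ⊆ PiA n) {w : WA n} :
    w ∈ XP n S ↔ AscentsOn (simpleIndices n S) w := by
  simp only [XP, mem_filter, mem_univ, true_and, AscentsOn, mem_simpleIndices]
  constructor
  · rintro h _ ⟨k, hk, rfl⟩
    rw [natPerm_castSucc, natPerm_succ]
    exact h _ hk
  · intro h r hr
    obtain ⟨k, -, rfl⟩ := mem_image.1 (hS hr)
    have := h k ⟨k, hr, rfl⟩
    rwa [natPerm_castSucc, natPerm_succ] at this

lemma mk_mem_iff_of_subset_PiA {S : Finset (RootA n)} (hS : S ⊆ PiA n) {a b : Fin (n + 1)} :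
    (a, b) ∈ S ↔ (a : ℕ) ∈ simpleIndices n S ∧ (b : ℕ) = a + 1 := by
  constructor
  · intro h
    obtain ⟨k, -, hk⟩ := mem_image.1 (hS h)
    obtain ⟨rfl, rfl⟩ := Prod.mk.inj hk
    exact ⟨mem_simpleIndices.2 ⟨k, h, rfl⟩, rfl⟩
  · rintro ⟨ha, hb⟩
    obtain ⟨k, hk, hka⟩ := mem_simpleIndices.1 ha
    rwa [show a = k.castSucc from Fin.ext hka.symm,
      show b = k.succ from Fin.ext (by simp [hb, ← hka])]

lemma mem_image_act_inv {S : Finset (RootA n)} {d : WA n} {r : RootA n} :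
    r ∈ S.image (act n d⁻¹) ↔ act n d r ∈ S := by
  refine ⟨fun h => ?_, fun h => mem_image.2 ⟨_, h, by simp [act]⟩⟩
  obtain ⟨s, hs, rfl⟩ := mem_image.1 h
  simpa [act] using hs

lemma simpleIndices_inter_image {M N : Finset (RootA n)} (hM : M ⊆ PiA n) (d : WA n) :
    simpleIndices n (M.image (act n d⁻¹) ∩ N) =
      interPreimage (simpleIndices n M) (simpleIndices n N) d := by
  ext j
  simp only [interPreimage, mem_filter, mem_simpleIndices, mem_inter, mem_image_act_inv, act]
  constructor
  · rintro ⟨k, ⟨hkM, hkN⟩, rfl⟩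
    rw [mk_mem_iff_of_subset_PiA hM] at hkM
    rw [natPerm_castSucc, natPerm_succ]
    exact ⟨⟨k, hkN, rfl⟩, mem_simpleIndices.1 hkM.1, hkM.2⟩
  · rintro ⟨⟨k, hkN, rfl⟩, hM', hsucc⟩
    rw [natPerm_castSucc] at hM' hsucc
    rw [natPerm_succ] at hsucc
    exact ⟨k, ⟨(mk_mem_iff_of_subset_PiA hM).2 ⟨mem_simpleIndices.2 hM', hsucc⟩, hkN⟩, rfl⟩

lemma swap_mem_WP {J : Finset (RootA n)} {a b : Fin (n + 1)}
    (hab : SameBlock (simpleIndices n J) a b) : swap a b ∈ WP n J := by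
  wlog hle : a ≤ b generalizing a b
  · rw [swap_comm]; exact this hab.symm (le_of_not_ge hle)
  induction b using Fin.induction with
  | zero => rw [nonpos_iff_eq_zero.1 hle, swap_self]; exact one_mem _
  | succ k ih =>
    rcases eq_or_lt_of_le hle with rfl | hlt
    · rw [swap_self]; exact one_mem _
    have hle' : a ≤ k.castSucc := Fin.le_castSucc_iff.2 hlt
    have hk : (k.castSucc, k.succ) ∈ J :=
      val_mem_simpleIndices.1 (hab k (Or.inl ⟨Fin.le_def.1 hle', by simp⟩))
    refine SubmonoidClass.swap_mem_trans (WP n J) (ih (hab.left_of_le hle' (by simp)) hle') ?_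
    exact Subgroup.subset_closure ⟨_, hk, rfl⟩

lemma WP_eq_youngSubgroup {J : Finset (RootA n)} (hJ : J ⊆ PiA n) :
    WP n J = youngSubgroup (simpleIndices n J) := by
  have hswap : ∀ f ∈ (fun p : RootA n => swap p.1 p.2) '' (J : Set (RootA n)), f.IsSwap := by
    rintro _ ⟨p, hp, rfl⟩
    obtain ⟨k, -, rfl⟩ := mem_image.1 (hJ hp)
    exact ⟨_, _, (Fin.castSucc_lt_succ (i := k)).ne, rfl⟩
  apply le_antisymm
  · rw [WP, Subgroup.closure_le]
    rintro _ ⟨p, hp, rfl⟩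
    obtain ⟨k, -, rfl⟩ := mem_image.1 (hJ hp)
    exact swap_mem_youngSubgroup (SameBlock.of_mem (mem_simpleIndices.2 ⟨k, hp, rfl⟩))
  · intro w hw
    rw [WP, mem_closure_isSwap hswap]
    refine ⟨Set.toFinite _, fun x => ?_⟩
    rw [← swap_mem_closure_isSwap hswap]
    exact swap_mem_WP (by simpa only [natPerm_apply_val] using (hw x).symm)

lemma mem_XPrel_iff {J S : Finset (RootA n)} (hJ : J ⊆ PiA n) (hS : S ⊆ PiA n) {w : WA n} :
    w ∈ XPrel n J S ↔
      AscentsOn (simpleIndices n S) w ∧ w ∈ youngSubgroup (simpleIndices n J) := by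
  rw [XPrel, mem_filter, mem_XP_iff_ascentsOn hS, WP_eq_youngSubgroup hJ]

end Roots

section Algebra

variable {n : ℕ} {J M N : Finset (RootA n)}

def solomonPairs (n : ℕ) (J M N : Finset (RootA n)) : Finset (Σ _ : WA n, WA n) :=
  ((XD n M N).filter (· ∈ WP n J)).sigma fun d => XPrel n J (M.image (act n d⁻¹) ∩ N)

lemma mem_solomonPairs_iff (hM : M ⊆ J) (hN : N ⊆ J) (hJ : J ⊆ PiA n)
    {q : Σ _ : WA n, WA n} :
    q ∈ solomonPairs n J M N ↔
      (AscentsOn (simpleIndices n M) q.1⁻¹ ∧ AscentsOn (simpleIndices n N) q.1 ∧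
        q.1 ∈ youngSubgroup (simpleIndices n J)) ∧
      AscentsOn (interPreimage (simpleIndices n M) (simpleIndices n N) q.1) q.2 ∧
        q.2 ∈ youngSubgroup (simpleIndices n J) := by
  rw [solomonPairs, mem_sigma, mem_filter, XD, mem_filter, mem_XP_iff_ascentsOn (hM.trans hJ),
    mem_XP_iff_ascentsOn (hN.trans hJ), WP_eq_youngSubgroup hJ,
    mem_XPrel_iff hJ (inter_subset_right.trans (hN.trans hJ)),
    simpleIndices_inter_image (hM.trans hJ)]
  simp only [mem_univ, true_and, and_assoc]

lemma xArel_mul_xArel (J M N : Finset (RootA n)) :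
    xArel n J M * xArel n J N =
      ∑ p ∈ XPrel n J M ×ˢ XPrel n J N, MonoidAlgebra.of ℚ (WA n) (p.1 * p.2) := by
  simp only [xArel, sum_mul_sum, ← map_mul, sum_product]

lemma sum_aCrel_smul_xArel (J M N : Finset (RootA n)) :
    ∑ P ∈ N.powerset, (aCrel n J M N P : ℚ) • xArel n J P =
      ∑ q ∈ solomonPairs n J M N, MonoidAlgebra.of ℚ (WA n) q.2 := by
  rw [solomonPairs, sum_sigma, ← sum_fiberwise_of_maps_to (t := N.powerset)
    (g := fun d => M.image (act n d⁻¹) ∩ N) fun _ _ => mem_powerset.2 inter_subset_right]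
  refine sum_congr rfl fun P _ => ?_
  rw [aCrel, Nat.cast_smul_eq_nsmul, ← sum_const]
  exact sum_congr rfl fun d hd => by rw [(mem_filter.1 hd).2, xArel]

lemma sum_XPrel_prod_eq_sum_solomonPairs {β : Type*} [AddCommMonoid β] (f : WA n → β)
    (hM : M ⊆ J) (hN : N ⊆ J) (hJ : J ⊆ PiA n) :
    ∑ p ∈ XPrel n J M ×ˢ XPrel n J N, f (p.1 * p.2) = ∑ q ∈ solomonPairs n J M N, f q.2 := by
  have hDM : ∀ k ∈ simpleIndices n M, k + 1 < n + 1 := succ_lt_of_mem_simpleIndices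
  have hDN : ∀ k ∈ simpleIndices n N, k + 1 < n + 1 := succ_lt_of_mem_simpleIndices
  have hMJ := simpleIndices_mono hM
  have mem_prod (p : WA n × WA n) : p ∈ XPrel n J M ×ˢ XPrel n J N ↔
      (AscentsOn (simpleIndices n M) p.1 ∧ p.1 ∈ youngSubgroup (simpleIndices n J)) ∧
        AscentsOn (simpleIndices n N) p.2 ∧ p.2 ∈ youngSubgroup (simpleIndices n J) := by
    rw [mem_product, mem_XPrel_iff hJ (hM.trans hJ), mem_XPrel_iff hJ (hN.trans hJ)]
  refine sum_nbij' (fun p => ⟨minRep (simpleIndices n M) p.2, p.1 * p.2⟩)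
    (fun q => (q.2 * (blockRank (simpleIndices n M) q.1 q.2)⁻¹,
      blockRank (simpleIndices n M) q.1 q.2)) ?_ ?_ ?_ ?_ fun _ _ => rfl
  · rintro ⟨u, v⟩ huv
    obtain ⟨⟨hu, huJ⟩, hv, hvJ⟩ := (mem_prod _).1 huv
    exact (mem_solomonPairs_iff hM hN hJ).2
      ⟨⟨ascentsOn_minRep_inv hDM v, ascentsOn_minRep hDN hv, blockRank_mem_youngSubgroup hMJ hvJ⟩,
        ascentsOn_interPreimage_mul hDN hu hv, mul_mem huJ hvJ⟩
  · rintro ⟨d, e⟩ hde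
    obtain ⟨⟨hdM, hdN, hdJ⟩, he, heJ⟩ := (mem_solomonPairs_iff hM hN hJ).1 hde
    have hψJ := blockRank_mem_youngSubgroup (σ := e) hMJ hdJ
    exact (mem_prod _).2 ⟨⟨ascentsOn_mul_blockRank_inv hDM, mul_mem heJ (inv_mem hψJ)⟩,
      ascentsOn_blockRank_of_interPreimage hDN hdN hdM he, hψJ⟩
  · rintro ⟨u, v⟩ huv
    simp only [blockRank_minRep ((mem_prod _).1 huv).1.1, mul_inv_cancel_right]
  · rintro ⟨d, e⟩ hde
    simp only [minRep_blockRank ((mem_solomonPairs_iff hM hN hJ).1 hde).1.1,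
      inv_mul_cancel_right]

end Algebra

end RelativeSolomon

theorem relative_solomon_rule_general (n : ℕ) (M N J : Finset (RootA n))
    (hM : M ⊆ J) (hN : N ⊆ J) (hJ : J ⊆ PiA n) :
    xArel n J M * xArel n J N =
      ∑ P ∈ N.powerset, (aCrel n J M N P : ℚ) • xArel n J P := by
  rw [RelativeSolomon.xArel_mul_xArel, RelativeSolomon.sum_aCrel_smul_xArel]
  exact RelativeSolomon.sum_XPrel_prod_eq_sum_solomonPairs _ hM hN hJ

/-- relative Solomon multiplication rule inside `W_J`: for `M, N ⊆ J ⊆ Π`,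
`x_M^J · x_N^J = Σ_{P ⊆ N} a^J_{MNP} · x_P^J` in `ℚ[W]`. -/
theorem relative_solomon_rule (n : ℕ) (hn : 1 ≤ n) (M N J : Finset (RootA n))
    (hM : M ⊆ J) (hN : N ⊆ J) (hJ : J ⊆ PiA n) :
    xArel n J M * xArel n J N =
      ∑ P ∈ N.powerset, (aCrel n J M N P : ℚ) • xArel n J P :=
  relative_solomon_rule_general n M N J hM hN hJ
end
end

section
/- The family {x_J : J ⊆ Π} is linearly independent over ℚ in the rational group algebra ℚ[W]; in particular, distinct subsets J of Π give distinct elements x_J, and {x_J : J ⊆ Π} is a basis of the descent algebra Σ(W) = Sp{x_J : J ⊆ Π}. -/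
open scoped Classical

noncomputable section

/-!
For every `T ⊆ Π` there is a permutation whose set of ascents `{eᵢ - eᵢ₊₁ : w i < w (i+1)}`
is exactly `T`. Such a `w` lies in `X_J` iff `J ⊆ T`, so the coefficient of `w` in `x_J` is `[J ⊆ T]`.
Evaluating a linear relation `∑ c_J x_J = 0` at these permutations gives a unitriangular
system for the `c_J` with respect to inclusion, whence all `c_J = 0`.
-/

theorem linearIndependent_of_triangular {ι R M : Type*} [Finite ι] [PartialOrder ι] [Ring R]
    [AddCommGroup M] [Module R M] (v : ι → M) (φ : ι → M →ₗ[R] R)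
    (h_lower : ∀ i j, φ i (v j) ≠ 0 → j ≤ i) (h_diag : ∀ i, φ i (v i) = 1) :
    LinearIndependent R v := by
  have := Fintype.ofFinite ι
  rw [Fintype.linearIndependent_iff]
  intro g hg i
  induction i using WellFoundedLT.induction with
  | _ i ih =>
    have h := congrArg (φ i) hg
    rw [map_sum, map_zero, Finset.sum_eq_single i] at h
    · simpa [h_diag] using h
    · intro j _ hji
      by_cases hle : j ≤ i
      · simp [ih j (lt_of_le_of_ne hle hji)]
      · simp [not_imp_comm.mp (h_lower i j) hle]
    · simp

theorem Equiv.Perm.exists_lt_iff_of_injective {α : Type*} [LinearOrder α] {m : ℕ}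
    {f : Fin m → α} (hf : Function.Injective f) :
    ∃ w : Equiv.Perm (Fin m), ∀ i j, w i < w j ↔ f i < f j := by
  have hs : StrictMono (f ∘ Tuple.sort f) :=
    (Tuple.monotone_sort f).strictMono_of_injective (hf.comp (Equiv.injective _))
  refine ⟨(Tuple.sort f)⁻¹, fun i j => ?_⟩
  simpa using (hs.lt_iff_lt (a := (Tuple.sort f)⁻¹ i) (b := (Tuple.sort f)⁻¹ j)).symm

theorem Equiv.Perm.exists_ascents_eq {n : ℕ} (T : Finset (Fin n)) :
    ∃ w : Equiv.Perm (Fin (n + 1)), ∀ i : Fin n, w i.castSucc < w i.succ ↔ i ∈ T := by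
  -- sort by (number of ascents to the left, then decreasing position)
  let key : Fin (n + 1) → ℕ ×ₗ ℕᵒᵈ := fun k =>
    toLex ((T.filter fun j => j.val < k.val).card, OrderDual.toDual k.val)
  have hkey : Function.Injective key := fun a b h => Fin.ext (congrArg (·.2) (ofLex_inj.mpr h))
  obtain ⟨w, hw⟩ := Equiv.Perm.exists_lt_iff_of_injective hkey
  refine ⟨w, fun i => ?_⟩
  rw [hw, Prod.Lex.toLex_lt_toLex]
  by_cases hi : i ∈ T
  · refine iff_of_true (Or.inl (Finset.card_lt_card ?_)) hi
    refine Finset.ssubset_iff_of_subset (Finset.monotone_filter_right _ fun j hj => ?_) |>.mpr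
      ⟨i, by simp [hi]⟩
    simp only [Fin.val_castSucc, Fin.val_succ] at hj ⊢
    omega
  · have hcount : (T.filter fun j => j.val < i.castSucc.val) =
        T.filter fun j => j.val < i.succ.val := by
      refine Finset.filter_congr fun j hj => ?_
      have hji : j.val ≠ i.val := Fin.val_ne_of_ne fun h => hi (h ▸ hj)
      simp only [Fin.val_castSucc, Fin.val_succ]
      omega
    simp only [hcount, lt_irrefl, false_or, true_and, hi, iff_false]
    rw [OrderDual.toDual_lt_toDual, Fin.val_castSucc, Fin.val_succ]
    omega

theorem mem_XP_iff_subset {n : ℕ} {J T : Finset (RootA n)} (hJ : J ⊆ PiA n) {w : WA n}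
    (hw : ∀ i : Fin n, w i.castSucc < w i.succ ↔ (i.castSucc, i.succ) ∈ T) :
    w ∈ XP n J ↔ J ⊆ T := by
  simp only [XP, Finset.mem_filter, Finset.mem_univ, true_and]
  refine forall₂_congr fun r hr => ?_
  obtain ⟨i, -, rfl⟩ := Finset.mem_image.mp (hJ hr)
  exact hw i

theorem exists_mem_XP_iff_subset {n : ℕ} (T : Finset (RootA n)) :
    ∃ w : WA n, ∀ J ⊆ PiA n, w ∈ XP n J ↔ J ⊆ T := by
  obtain ⟨w, hw⟩ := Equiv.Perm.exists_ascents_eq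
    (Finset.univ.filter fun i : Fin n => (i.castSucc, i.succ) ∈ T)
  exact ⟨w, fun J hJ => mem_XP_iff_subset hJ fun i => by simpa using hw i⟩

theorem xA_coeff (n : ℕ) (J : Finset (RootA n)) (w : WA n) :
    (xA n J).coeff w = if w ∈ XP n J then 1 else 0 := by
  simp [xA, MonoidAlgebra.coeff_sum, Finsupp.finsetSum_apply, MonoidAlgebra.of_apply,
    MonoidAlgebra.coeff_single, Finsupp.single_apply]

theorem xA_linearIndependent_general (n : ℕ) :
    LinearIndependent ℚ (fun J : {J : Finset (RootA n) // J ⊆ PiA n} => xA n J.1) ∧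
    Function.Injective (fun J : {J : Finset (RootA n) // J ⊆ PiA n} => xA n J.1) := by
  choose w hw using fun T : Finset (RootA n) => exists_mem_XP_iff_subset T
  let coeffAt (T : {J : Finset (RootA n) // J ⊆ PiA n}) : MonoidAlgebra ℚ (WA n) →ₗ[ℚ] ℚ :=
    Finsupp.lapply (w T.1) ∘ₗ (MonoidAlgebra.coeffLinearEquiv ℚ).toLinearMap
  have hcoeff : ∀ T J : {J : Finset (RootA n) // J ⊆ PiA n},
      coeffAt T (xA n J.1) = if J ≤ T then 1 else 0 := fun T J => by
    simp [coeffAt, xA_coeff, hw T.1 J.1 J.2]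
  have hLI : LinearIndependent ℚ (fun J : {J : Finset (RootA n) // J ⊆ PiA n} => xA n J.1) :=
    linearIndependent_of_triangular _ coeffAt
      (fun T J h => by simpa [hcoeff] using h) (fun T => by simp [hcoeff])
  exact ⟨hLI, hLI.injective⟩

/-- the family `{x_J : J ⊆ Π}` is linearly independent over `ℚ` in `ℚ[W]`;
in particular distinct subsets `J ⊆ Π` give distinct elements `x_J`, so that
`{x_J : J ⊆ Π}` is a basis of the descent algebra `Σ(W) = Sp{x_J : J ⊆ Π}`. -/
theorem xA_linearIndependent (n : ℕ) (hn : 1 ≤ n) :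
    LinearIndependent ℚ (fun J : {J : Finset (RootA n) // J ⊆ PiA n} => xA n J.1) ∧
    Function.Injective (fun J : {J : Finset (RootA n) // J ⊆ PiA n} => xA n J.1) :=
  xA_linearIndependent_general n
end
end
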